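/- arXiv:2301.01508 — 7 statements merged into one kernel-verified Lean document; each statement's English description precedes it below -/
import Mathlib

section
/- The star graph on 4 vertices with center c and leaves {1,2,3}, with leaf weights Δ > 0 and center weight 3Δ, has ground state manifold (weight-maximizing independent sets) exactly {{c}, {1,2,3}}; restricted to the three leaves, this realizes the copy language {000, 111}. -/
open Finset
open scoped Classical

section Framework

variable {V : Type*} {ι : Type*}

/-- An independent set of a simple graph, given as a `Finset` of vertices. -/
def IsIndepSet' (G : SimpleGraph V) (S : Finset V) : Prop :=
  ∀ i ∈ S, ∀ j ∈ S, ¬ G.Adj i j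

/-- Total weight of a finite set of vertices. -/
noncomputable def wt (Δ : V → ℝ) (S : Finset V) : ℝ := ∑ v ∈ S, Δ v

/-- `S` is a maximum-weight independent set of `G` with weights `Δ`. -/
def IsMWIS (G : SimpleGraph V) (Δ : V → ℝ) (S : Finset V) : Prop :=
  IsIndepSet' G S ∧ ∀ T : Finset V, IsIndepSet' G T → wt Δ T ≤ wt Δ S

/-- Indicator vector recording which ports are contained in `S`. -/
noncomputable def portInd (ports : ι → V) (S : Finset V) : ι → Bool :=
  fun i => if ports i ∈ S then true else false

/-- The weighted graph `G` with designated `ports` realizes the language `L`: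
the map from maximum-weight independent sets to port indicator vectors is a
bijection onto `L`. -/
def Realizes (G : SimpleGraph V) (Δ : V → ℝ) (ports : ι → V)
    (L : Set (ι → Bool)) : Prop :=
  (∀ S, IsMWIS G Δ S → portInd ports S ∈ L) ∧
  (∀ x ∈ L, ∃ S, IsMWIS G Δ S ∧ portInd ports S = x) ∧
  (∀ S T, IsMWIS G Δ S → IsMWIS G Δ T →
    portInd ports S = portInd ports T → S = T)

/-- A maximal independent set: no vertex can be added while staying independent. -/
def IsMaxlIndep (G : SimpleGraph V) (S : Finset V) : Prop :=
  IsIndepSet' G S ∧ ∀ v ∉ S, ¬ IsIndepSet' G (insert v S)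

end Framework

/-- The star graph on `Fin 4` with center `3` and leaves `0,1,2`. -/
def starGraph : SimpleGraph (Fin 4) :=
  SimpleGraph.fromRel (fun i _ => i = 3)

/-- The copy language `{000, 111}` on three letters. -/
def LCPY : Set (Fin 3 → Bool) :=
  {(fun _ => false), (fun _ => true)}

lemma star_adj (i j : Fin 4) : starGraph.Adj i j ↔ i ≠ j ∧ (i = 3 ∨ j = 3) := by
  simp [starGraph, SimpleGraph.fromRel_adj]

lemma indep_cases {S : Finset (Fin 4)} (h : IsIndepSet' starGraph S) :
    S = {3} ∨ S ⊆ ({0,1,2} : Finset (Fin 4)) := by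
  by_cases h3 : (3 : Fin 4) ∈ S
  · left; ext j
    simp only [Finset.mem_singleton]
    constructor
    · intro hj; by_contra hne
      exact h 3 h3 j hj ((star_adj 3 j).2 ⟨fun e => hne e.symm, Or.inl rfl⟩)
    · rintro rfl; exact h3
  · right; intro j hj
    fin_cases j <;> simp_all <;> decide

lemma indep_singleton3 : IsIndepSet' starGraph {3} := by
  intro i hi j hj
  simp at hi hj; subst hi; subst hj
  simp [star_adj]

lemma indep_leaves : IsIndepSet' starGraph {0,1,2} := by
  intro i hi j hj
  rw [star_adj]
  rintro ⟨-, h3 | h3⟩ <;> subst h3 <;> simp_all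

lemma wt_subset_leaves (Δ : ℝ) {T : Finset (Fin 4)} (hT : T ⊆ ({0,1,2} : Finset (Fin 4))) :
    wt (fun i => if i = 3 then 3 * Δ else Δ) T = T.card * Δ := by
  rw [wt, Finset.sum_congr rfl (fun v hv => ?_), Finset.sum_const, nsmul_eq_mul]
  have := hT hv
  fin_cases v <;> simp_all

lemma wt_singleton3 (Δ : ℝ) : wt (fun i => if i = 3 then 3 * Δ else Δ) ({3} : Finset (Fin 4)) = 3 * Δ := by
  simp [wt]

lemma wt_le_max (Δ : ℝ) (hΔ : 0 < Δ) {T : Finset (Fin 4)} (hT : IsIndepSet' starGraph T) :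
    wt (fun i => if i = 3 then 3 * Δ else Δ) T ≤ 3 * Δ := by
  rcases indep_cases hT with rfl | hsub
  · rw [wt_singleton3]
  · rw [wt_subset_leaves Δ hsub]
    have hc : (T.card : ℝ) ≤ 3 := by
      have := Finset.card_le_card hsub
      simp at this
      exact_mod_cast this
    nlinarith

lemma mwis_iff (Δ : ℝ) (hΔ : 0 < Δ) (S : Finset (Fin 4)) :
    IsMWIS starGraph (fun i => if i = 3 then 3 * Δ else Δ) S ↔
      S = {3} ∨ S = ({0,1,2} : Finset (Fin 4)) := by
  constructor
  · rintro ⟨hind, hmax⟩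
    rcases indep_cases hind with rfl | hsub
    · exact Or.inl rfl
    · right
      have h1 := hmax {3} indep_singleton3
      rw [wt_singleton3, wt_subset_leaves Δ hsub] at h1
      have hc : (3 : ℕ) ≤ S.card := by
        by_contra hc
        push_neg at hc
        have : (S.card : ℝ) < 3 := by exact_mod_cast hc
        nlinarith
      exact Finset.eq_of_subset_of_card_le hsub (by simpa using hc)
  · rintro (rfl | rfl)
    · exact ⟨indep_singleton3, fun T hT => by rw [wt_singleton3]; exact wt_le_max Δ hΔ hT⟩
    · refine ⟨indep_leaves, fun T hT => ?_⟩
      have : wt (fun i => if i = 3 then 3 * Δ else Δ) ({0,1,2} : Finset (Fin 4)) = 3 * Δ := by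
        rw [wt_subset_leaves Δ (le_refl _)]
        have h3 : ({0,1,2} : Finset (Fin 4)).card = 3 := by decide
        rw [h3]; norm_num
      rw [this]; exact wt_le_max Δ hΔ hT

lemma port_ne3 (i : Fin 3) : (Fin.castLE (by norm_num) i : Fin 4) ≠ 3 := by
  fin_cases i <;> decide

lemma port_mem_leaves (i : Fin 3) :
    (Fin.castLE (by norm_num) i : Fin 4) ∈ ({0,1,2} : Finset (Fin 4)) := by
  fin_cases i <;> decide

lemma portInd_center :
    portInd (fun i : Fin 3 => Fin.castLE (by norm_num) i) ({3} : Finset (Fin 4)) =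
      fun _ => false := by
  funext i
  simp [portInd, port_ne3 i]

lemma portInd_leaves :
    portInd (fun i : Fin 3 => Fin.castLE (by norm_num) i) ({0,1,2} : Finset (Fin 4)) =
      fun _ => true := by
  funext i
  simp [portInd, port_mem_leaves i]


/-- The star graph on 4 vertices with leaf weights `Δ > 0` and center
weight `3Δ` has ground state manifold exactly `{{center}, {leaves}}`, and restricted
to the three leaves as ports it realizes the copy language `{000, 111}`. -/
theorem star_realizes_copy (Δ : ℝ) (hΔ : 0 < Δ) :
    ({S : Finset (Fin 4) | IsMWIS starGraph (fun i => if i = 3 then 3 * Δ else Δ) S} =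
      {({3} : Finset (Fin 4)), ({0, 1, 2} : Finset (Fin 4))}) ∧
    Realizes starGraph (fun i => if i = 3 then 3 * Δ else Δ)
      (fun i : Fin 3 => Fin.castLE (by norm_num) i) LCPY := by
  refine ⟨?_, ?_, ?_, ?_⟩
  · ext S
    simp only [Set.mem_setOf_eq, Set.mem_insert_iff, Set.mem_singleton_iff]
    exact mwis_iff Δ hΔ S
  · intro S hS
    rcases (mwis_iff Δ hΔ S).1 hS with rfl | rfl
    · rw [portInd_center]; exact Or.inl rfl
    · rw [portInd_leaves]; exact Or.inr rfl
  · rintro x (rfl | rfl)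
    · exact ⟨{3}, (mwis_iff Δ hΔ _).2 (Or.inl rfl), portInd_center⟩
    · exact ⟨{0,1,2}, (mwis_iff Δ hΔ _).2 (Or.inr rfl), portInd_leaves⟩
  · intro S T hS hT hp
    rcases (mwis_iff Δ hΔ S).1 hS with rfl | rfl <;>
      rcases (mwis_iff Δ hΔ T).1 hT with rfl | rfl
    · rfl
    · rw [portInd_center, portInd_leaves] at hp
      exact absurd (congrFun hp 0) (by decide)
    · rw [portInd_center, portInd_leaves] at hp
      exact absurd (congrFun hp 0) (by decide)
    · rfl
end

section
/- There is no graph on vertex set {1,2,3} with strictly positive vertex weights whose weight-maximizing independent sets, restricted to the indicator vectors of all three vertices, are exactly the NOR language {001, 010, 100, 110} (with the states identified bijectively). -/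
open Finset
open scoped Classical

/-- The NOR language: truth table of `Q = ¬(A ∨ B)`, letters ordered `(A, B, Q)`. -/
def LNOR : Set (Fin 3 → Bool) :=
  {![false, false, true], ![false, true, false], ![true, false, false],
    ![true, true, false]}

/-- No graph on three vertices with strictly positive weights realizes
the NOR language `{001, 010, 100, 110}` on all three vertices as ports. -/
theorem no_nor_complex_on_three_atoms :
    ¬ ∃ (G : SimpleGraph (Fin 3)) (Δ : Fin 3 → ℝ),
      (∀ i, 0 < Δ i) ∧ Realizes G Δ (fun i : Fin 3 => i) LNOR := by
  rintro ⟨G, Δ, hΔ, hfwd, hsurj, hinj⟩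
  obtain ⟨S, hS, hSind⟩ := hsurj ![true, false, false] (by simp [LNOR])
  obtain ⟨T, hT, hTind⟩ := hsurj ![true, true, false] (by simp [LNOR])
  have h0S : (0 : Fin 3) ∈ S := by
    have := congrFun hSind 0; simpa [portInd] using this
  have h1S : (1 : Fin 3) ∉ S := by
    have := congrFun hSind 1; simpa [portInd] using this
  have h2S : (2 : Fin 3) ∉ S := by
    have := congrFun hSind 2; simpa [portInd] using this
  have h0T : (0 : Fin 3) ∈ T := by
    have := congrFun hTind 0; simpa [portInd] using this
  have h1T : (1 : Fin 3) ∈ T := by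
    have := congrFun hTind 1; simpa [portInd] using this
  have h2T : (2 : Fin 3) ∉ T := by
    have := congrFun hTind 2; simpa [portInd] using this
  have hSeq : S = {0} := by
    ext i; fin_cases i <;> simp [h0S, h1S, h2S]
  have hTeq : T = {0, 1} := by
    ext i; fin_cases i <;> simp [h0T, h1T, h2T]
  have h1 : wt Δ T ≤ wt Δ S := hS.2 T hT.1
  have h2 : wt Δ S ≤ wt Δ T := hT.2 S hS.1
  have heq : wt Δ S = wt Δ T := le_antisymm h2 h1
  rw [hSeq, hTeq] at heq
  have hwS : wt Δ ({0} : Finset (Fin 3)) = Δ 0 := by simp [wt]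
  have hwT : wt Δ ({0, 1} : Finset (Fin 3)) = Δ 0 + Δ 1 := by
    simp [wt, Finset.sum_pair (show (0:Fin 3) ≠ 1 by decide)]
  rw [hwS, hwT] at heq
  have : Δ 1 = 0 := by linarith
  exact absurd this (ne_of_gt (hΔ 1))
end

section
/- There is no graph on 4 vertices with strictly positive vertex weights and a choice of 3 port vertices such that the map from maximum-weight independent sets to port indicator vectors is a bijection onto the NOR language {001, 010, 100, 110}; hence a NOR-complex requires at least 5 atoms. -/
open Finset
open scoped Classical

/-- No graph on four vertices with strictly positive weights and three
(injectively chosen) port vertices realizes the NOR language `{001, 010, 100, 110}`;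
hence a NOR-complex requires at least 5 atoms. -/
theorem no_nor_complex_on_four_atoms :
    ¬ ∃ (G : SimpleGraph (Fin 4)) (Δ : Fin 4 → ℝ) (p : Fin 3 → Fin 4),
      (∀ i, 0 < Δ i) ∧ Function.Injective p ∧ Realizes G Δ p LNOR := by
  rintro ⟨G, Δ, p, hΔ, hinj, hreal⟩
  obtain ⟨hsound, hcomplete, huniq⟩ := hreal
  -- distinctness of ports
  have hp01 : p 0 ≠ p 1 := fun h => absurd (hinj h) (by decide)
  have hp02 : p 0 ≠ p 2 := fun h => absurd (hinj h) (by decide)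
  have hp12 : p 1 ≠ p 2 := fun h => absurd (hinj h) (by decide)
  -- ancilla
  obtain ⟨a, ha⟩ : ∃ a : Fin 4, ∀ i, a ≠ p i := by
    by_contra h
    push_neg at h
    have hsurj : Function.Surjective p := fun v => (h v).imp (fun i hi => hi.symm)
    have := Fintype.card_le_of_surjective p hsurj
    norm_num at this
  -- every vertex is one of the four
  have hv : ∀ v : Fin 4, v = p 0 ∨ v = p 1 ∨ v = p 2 ∨ v = a := by
    have hqinj : Function.Injective (![p 0, p 1, p 2, a] : Fin 4 → Fin 4) := by
      intro i j hij
      fin_cases i <;> fin_cases j <;> simp_all [hp01, hp02, hp12, ha] <;>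
        first
          | rfl
          | exact absurd hij hp01 | exact absurd hij.symm hp01
          | exact absurd hij hp02 | exact absurd hij.symm hp02
          | exact absurd hij hp12 | exact absurd hij.symm hp12
          | exact (ha 0) hij.symm | exact (ha 0) hij
          | exact (ha 1) hij.symm | exact (ha 1) hij
          | exact (ha 2) hij.symm | exact (ha 2) hij
    have hqsurj := (Finite.injective_iff_surjective).mp hqinj
    intro v
    obtain ⟨i, hi⟩ := hqsurj v
    fin_cases i <;> simp_all
  -- extraction from portInd
  have extract : ∀ (S : Finset (Fin 4)) (i : Fin 3) (x : Fin 3 → Bool),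
      portInd p S = x → (p i ∈ S ↔ x i = true) := by
    intro S i x h
    rw [← h]
    by_cases hm : p i ∈ S <;> simp [portInd, hm]
  -- the three MWIS's we need
  obtain ⟨S110, h110, hx110⟩ := hcomplete ![true, true, false] (by simp [LNOR])
  obtain ⟨S100, h100, hx100⟩ := hcomplete ![true, false, false] (by simp [LNOR])
  obtain ⟨S010, h010, hx010⟩ := hcomplete ![false, true, false] (by simp [LNOR])
  -- memberships
  have m110_0 : p 0 ∈ S110 := (extract _ 0 _ hx110).mpr (by norm_num)
  have m110_1 : p 1 ∈ S110 := (extract _ 1 _ hx110).mpr (by norm_num)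
  have m110_2 : p 2 ∉ S110 := fun h => by simpa using (extract _ 2 _ hx110).mp h
  have m100_0 : p 0 ∈ S100 := (extract _ 0 _ hx100).mpr (by norm_num)
  have m100_1 : p 1 ∉ S100 := fun h => by simpa using (extract _ 1 _ hx100).mp h
  have m100_2 : p 2 ∉ S100 := fun h => by simpa using (extract _ 2 _ hx100).mp h
  have m010_0 : p 0 ∉ S010 := fun h => by simpa using (extract _ 0 _ hx010).mp h
  have m010_1 : p 1 ∈ S010 := (extract _ 1 _ hx010).mpr (by norm_num)
  have m010_2 : p 2 ∉ S010 := fun h => by simpa using (extract _ 2 _ hx010).mp h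
  -- equal weights
  have W1 : wt Δ S100 = wt Δ S110 := le_antisymm (h110.2 _ h100.1) (h100.2 _ h110.1)
  have W2 : wt Δ S010 = wt Δ S110 := le_antisymm (h110.2 _ h010.1) (h010.2 _ h110.1)
  have hΔ0 := hΔ (p 0)
  have hΔ1 := hΔ (p 1)
  have hΔa := hΔ a
  by_cases haS110 : a ∈ S110
  · -- S110 = {p0, p1, a}, and S100 ⊆ {p0, a} has strictly smaller weight
    have hS110 : S110 = {p 0, p 1, a} := by
      ext v
      simp only [Finset.mem_insert, Finset.mem_singleton]
      constructor
      · intro hvS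
        rcases hv v with h | h | h | h
        · exact Or.inl h
        · exact Or.inr (Or.inl h)
        · exact absurd (h ▸ hvS) m110_2
        · exact Or.inr (Or.inr h)
      · rintro (rfl | rfl | rfl) <;> assumption
    have w110 : wt Δ S110 = Δ (p 0) + Δ (p 1) + Δ a := by
      rw [hS110, wt, Finset.sum_insert (by simp [hp01, Ne.symm (ha 0)]),
        Finset.sum_insert (by simp [Ne.symm (ha 1)]), Finset.sum_singleton]
      ring
    by_cases haS100 : a ∈ S100
    · have hS100 : S100 = {p 0, a} := by
        ext v
        simp only [Finset.mem_insert, Finset.mem_singleton]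
        constructor
        · intro hvS
          rcases hv v with h | h | h | h
          · exact Or.inl h
          · exact absurd (h ▸ hvS) m100_1
          · exact absurd (h ▸ hvS) m100_2
          · exact Or.inr h
        · rintro (rfl | rfl) <;> assumption
      have w100 : wt Δ S100 = Δ (p 0) + Δ a := by
        rw [hS100, wt, Finset.sum_insert (by simp [Ne.symm (ha 0)]), Finset.sum_singleton]
      rw [w100, w110] at W1
      linarith
    · have hS100 : S100 = {p 0} := by
        ext v
        simp only [Finset.mem_singleton]
        constructor
        · intro hvS
          rcases hv v with h | h | h | h
          · exact h
          · exact absurd (h ▸ hvS) m100_1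
          · exact absurd (h ▸ hvS) m100_2
          · exact absurd (h ▸ hvS) haS100
        · rintro rfl; assumption
      have w100 : wt Δ S100 = Δ (p 0) := by rw [hS100, wt, Finset.sum_singleton]
      rw [w100, w110] at W1
      linarith
  · -- S110 = {p0, p1}
    have hS110 : S110 = {p 0, p 1} := by
      ext v
      simp only [Finset.mem_insert, Finset.mem_singleton]
      constructor
      · intro hvS
        rcases hv v with h | h | h | h
        · exact Or.inl h
        · exact Or.inr h
        · exact absurd (h ▸ hvS) m110_2
        · exact absurd (h ▸ hvS) haS110
      · rintro (rfl | rfl) <;> assumption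
    have w110 : wt Δ S110 = Δ (p 0) + Δ (p 1) := by
      rw [hS110, wt, Finset.sum_insert (by simp [hp01]), Finset.sum_singleton]
    -- ancilla must be in S100
    have haS100 : a ∈ S100 := by
      by_contra haS100
      have hS100 : S100 = {p 0} := by
        ext v
        simp only [Finset.mem_singleton]
        constructor
        · intro hvS
          rcases hv v with h | h | h | h
          · exact h
          · exact absurd (h ▸ hvS) m100_1
          · exact absurd (h ▸ hvS) m100_2
          · exact absurd (h ▸ hvS) haS100
        · rintro rfl; assumption
      have w100 : wt Δ S100 = Δ (p 0) := by rw [hS100, wt, Finset.sum_singleton]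
      rw [w100, w110] at W1
      linarith
    have haS010 : a ∈ S010 := by
      by_contra haS010
      have hS010 : S010 = {p 1} := by
        ext v
        simp only [Finset.mem_singleton]
        constructor
        · intro hvS
          rcases hv v with h | h | h | h
          · exact absurd (h ▸ hvS) m010_0
          · exact h
          · exact absurd (h ▸ hvS) m010_2
          · exact absurd (h ▸ hvS) haS010
        · rintro rfl; assumption
      have w010 : wt Δ S010 = Δ (p 1) := by rw [hS010, wt, Finset.sum_singleton]
      rw [w010, w110] at W2
      linarith
    -- non-adjacencies
    have hn01 : ¬ G.Adj (p 0) (p 1) := h110.1 _ m110_0 _ m110_1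
    have hn0a : ¬ G.Adj (p 0) a := h100.1 _ m100_0 _ haS100
    have hn1a : ¬ G.Adj (p 1) a := h010.1 _ m010_1 _ haS010
    -- the bigger independent set
    have hTindep : IsIndepSet' G {p 0, p 1, a} := by
      intro i hi j hj
      simp only [Finset.mem_insert, Finset.mem_singleton] at hi hj
      rcases hi with rfl | rfl | rfl <;> rcases hj with rfl | rfl | rfl <;>
        first
          | exact G.irrefl
          | exact hn01 | exact fun h => hn01 h.symm
          | exact hn0a | exact fun h => hn0a h.symm
          | exact hn1a | exact fun h => hn1a h.symm
    have hwT : wt Δ ({p 0, p 1, a} : Finset (Fin 4)) = Δ (p 0) + Δ (p 1) + Δ a := by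
      rw [wt, Finset.sum_insert (by simp [hp01, Ne.symm (ha 0)]),
        Finset.sum_insert (by simp [Ne.symm (ha 1)]), Finset.sum_singleton]
      ring
    have := h110.2 _ hTindep
    rw [hwT, w110] at this
    linarith
end

section
/- There is no assignment of strictly positive weights Δ₁,…,Δ₅ to the path graph P₅ (vertices 1–2–3–4–5) such that the four maximal independent sets {1,3,5}, {1,4}, {2,5}, {2,4} all have equal total weight; consequently AND, OR, and XNOR gates cannot be realized as maximum-weight-independent-set complexes on 5 vertices. -/
open Finset
open scoped Classical

/-- The AND language: truth table of `Q = A ∧ B`, letters ordered `(A, B, Q)`. -/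
def LAND : Set (Fin 3 → Bool) :=
  {![false, false, false], ![false, true, false], ![true, false, false],
    ![true, true, true]}

/-- The OR language: truth table of `Q = A ∨ B`. -/
def LOR : Set (Fin 3 → Bool) :=
  {![false, false, false], ![false, true, true], ![true, false, true],
    ![true, true, true]}

/-- The XNOR language: truth table of `Q = A XNOR B`. -/
def LXNOR : Set (Fin 3 → Bool) :=
  {![false, false, true], ![false, true, false], ![true, false, false],
    ![true, true, true]}


section Helpers

variable {V : Type*}

lemma wt_nonneg {Δ : V → ℝ} (hΔ : ∀ i, 0 < Δ i) (S : Finset V) : 0 ≤ wt Δ S :=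
  Finset.sum_nonneg fun i _ => (hΔ i).le

lemma pos_nonempty {Δ : V → ℝ} {S : Finset V} (h : 0 < wt Δ S) : S.Nonempty := by
  by_contra hc
  rw [Finset.not_nonempty_iff_eq_empty] at hc
  subst hc
  simp [wt] at h

lemma insert_lem [DecidableEq V] {G : SimpleGraph V} {Δ : V → ℝ}
    (hΔ : ∀ i, 0 < Δ i) {S : Finset V} {b : V} (hM : IsMWIS G Δ S) (hbS : b ∉ S)
    (hind : IsIndepSet' G (insert b S)) : False := by
  have h := hM.2 _ hind
  simp only [wt] at h
  rw [Finset.sum_insert hbS] at h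
  have := hΔ b
  linarith

lemma pair_lem [DecidableEq V] {G : SimpleGraph V} {Δ : V → ℝ}
    (hΔ : ∀ i, 0 < Δ i) {S₁ S₂ : Finset V} (h1 : IsMWIS G Δ S₁) (h2 : IsIndepSet' G S₂)
    {a b : V} (hb1 : b ∉ S₁) (hb2 : b ∈ S₂) (hab : ¬ G.Adj a b)
    (hsub : S₁ \ {a} ⊆ S₂) : False := by
  refine insert_lem hΔ h1 hb1 ?_
  intro x hx y hy
  rcases Finset.mem_insert.1 hx with hxb | hx
  · rcases Finset.mem_insert.1 hy with hyb | hy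
    · rw [hxb, hyb]
      exact G.irrefl
    · rw [hxb]
      by_cases hya : y = a
      · rw [hya]
        intro h
        exact hab h.symm
      · exact h2 b hb2 y (hsub (by rw [Finset.mem_sdiff, Finset.mem_singleton]; exact ⟨hy, hya⟩))
  · rcases Finset.mem_insert.1 hy with hyb | hy
    · rw [hyb]
      by_cases hxa : x = a
      · rw [hxa]
        exact hab
      · intro h
        exact h2 x (hsub (by rw [Finset.mem_sdiff, Finset.mem_singleton]; exact ⟨hx, hxa⟩)) b hb2 h
    · exact h1.1 x hx y hy

lemma three_le [DecidableEq V] {K : Finset V} (hK : K.card = 2) {x y z : V}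
    (hx : x ∈ K) (hy : y ∈ K) (hz : z ∈ K) : x = y ∨ x = z ∨ y = z := by
  by_contra h
  push_neg at h
  obtain ⟨h1, h2, h3⟩ := h
  have hsub : ({x, y, z} : Finset V) ⊆ K := by
    intro t ht
    simp only [Finset.mem_insert, Finset.mem_singleton] at ht
    rcases ht with rfl | rfl | rfl <;> assumption
  have hc : ({x, y, z} : Finset V).card = 3 := by
    rw [Finset.card_insert_of_notMem (by simp [h1, h2]),
      Finset.card_insert_of_notMem (by simp [h3]), Finset.card_singleton]
  have := Finset.card_le_card hsub
  omega

lemma nest [DecidableEq V] {K A B : Finset V} (hK : K.card = 2) (hA : A ⊆ K) (hB : B ⊆ K)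
    (hAB : (A ∩ B).Nonempty) : A ⊆ B ∨ B ⊆ A := by
  obtain ⟨x, hx⟩ := hAB
  rw [Finset.mem_inter] at hx
  by_contra h
  push_neg at h
  obtain ⟨y, hyA, hyB⟩ := Finset.not_subset.1 h.1
  obtain ⟨z, hzB, hzA⟩ := Finset.not_subset.1 h.2
  rcases three_le hK (hA hx.1) (hA hyA) (hB hzB) with rfl | rfl | rfl
  · exact hyB hx.2
  · exact hzA hx.1
  · exact hzA hyA

lemma union_eq [DecidableEq V] {K A B : Finset V} (hK : K.card = 2) (hA : A ⊆ K) (hB : B ⊆ K)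
    (hd : A ∩ B = ∅) (hAn : A.Nonempty) (hBn : B.Nonempty) : A ∪ B = K := by
  apply Finset.eq_of_subset_of_card_le (Finset.union_subset hA hB)
  rw [Finset.card_union_of_disjoint (Finset.disjoint_iff_inter_eq_empty.2 hd)]
  have h1 := Finset.card_pos.2 hAn
  have h2 := Finset.card_pos.2 hBn
  omega

lemma sub_helper [DecidableEq V] {S T : Finset V} {a b q r : V}
    (h : S \ {a, b, q} ⊆ T)
    (ha : a = r ∨ a ∉ S ∨ a ∈ T) (hb : b = r ∨ b ∉ S ∨ b ∈ T)
    (hq : q = r ∨ q ∉ S ∨ q ∈ T) : S \ {r} ⊆ T := by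
  intro x hx
  rw [Finset.mem_sdiff, Finset.mem_singleton] at hx
  by_cases hxa : x = a
  · subst hxa
    rcases ha with h' | h' | h'
    · exact absurd h' hx.2
    · exact absurd hx.1 h'
    · exact h'
  by_cases hxb : x = b
  · subst hxb
    rcases hb with h' | h' | h'
    · exact absurd h' hx.2
    · exact absurd hx.1 h'
    · exact h'
  by_cases hxq : x = q
  · subst hxq
    rcases hq with h' | h' | h'
    · exact absurd h' hx.2
    · exact absurd hx.1 h'
    · exact h'
  exact h (by
    rw [Finset.mem_sdiff]
    refine ⟨hx.1, ?_⟩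
    simp only [Finset.mem_insert, Finset.mem_singleton]
    rintro (rfl | rfl | rfl) <;> simp_all)

lemma get_word {G : SimpleGraph (Fin 5)} {Δ : Fin 5 → ℝ} {p : Fin 3 → Fin 5}
    {L : Set (Fin 3 → Bool)} (hreal : Realizes G Δ p L) {x : Fin 3 → Bool} (hx : x ∈ L) :
    ∃ S, IsMWIS G Δ S ∧ ∀ i, (p i ∈ S ↔ x i = true) := by
  obtain ⟨S, hS, hport⟩ := hreal.2.1 x hx
  refine ⟨S, hS, fun i => ?_⟩
  have h := congrFun hport i
  simp only [portInd] at h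
  by_cases hm : p i ∈ S <;> simp [hm] at h <;> simp [hm, ← h]

end Helpers

section Main

lemma wt_insert {Δ : Fin 5 → ℝ} {S : Finset (Fin 5)} {a : Fin 5} (ha : a ∉ S) :
    wt Δ (insert a S) = Δ a + wt Δ S := by
  simp only [wt]
  exact Finset.sum_insert ha

lemma decomp1 {S : Finset (Fin 5)} {a b q : Fin 5} (ha : a ∈ S) (hb : b ∉ S) (hq : q ∉ S) :
    S = insert a (S \ {a, b, q}) := by
  ext x
  simp only [Finset.mem_insert, Finset.mem_sdiff, Finset.mem_singleton]
  constructor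
  · intro h
    by_cases hxa : x = a
    · exact Or.inl hxa
    · refine Or.inr ⟨h, ?_⟩
      rintro (rfl | rfl | rfl)
      · exact hxa rfl
      · exact hb h
      · exact hq h
  · rintro (rfl | h)
    · exact ha
    · exact h.1

lemma decomp0 {S : Finset (Fin 5)} {a b q : Fin 5} (ha : a ∉ S) (hb : b ∉ S) (hq : q ∉ S) :
    S \ {a, b, q} = S := by
  ext x
  simp only [Finset.mem_sdiff, Finset.mem_insert, Finset.mem_singleton]
  constructor
  · exact fun h => h.1
  · intro h
    refine ⟨h, ?_⟩
    rintro (rfl | rfl | rfl)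
    · exact ha h
    · exact hb h
    · exact hq h

lemma decomp2 {S : Finset (Fin 5)} {a b q : Fin 5} (haq : a ≠ q)
    (ha : a ∈ S) (hb : b ∉ S) (hq : q ∈ S) :
    S = insert a (insert q (S \ {a, b, q})) := by
  ext x
  simp only [Finset.mem_insert, Finset.mem_sdiff, Finset.mem_singleton]
  constructor
  · intro h
    by_cases hxa : x = a
    · exact Or.inl hxa
    by_cases hxq : x = q
    · exact Or.inr (Or.inl hxq)
    refine Or.inr (Or.inr ⟨h, ?_⟩)
    rintro (rfl | rfl | rfl)
    · exact hxa rfl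
    · exact hb h
    · exact hxq rfl
  · rintro (rfl | rfl | h)
    · exact ha
    · exact hq
    · exact h.1

lemma decomp3 {S : Finset (Fin 5)} {a b q : Fin 5} (hab : a ≠ b) (haq : a ≠ q) (hbq : b ≠ q)
    (ha : a ∈ S) (hb : b ∈ S) (hq : q ∈ S) :
    S = insert a (insert b (insert q (S \ {a, b, q}))) := by
  ext x
  simp only [Finset.mem_insert, Finset.mem_sdiff, Finset.mem_singleton]
  constructor
  · intro h
    by_cases hxa : x = a
    · exact Or.inl hxa
    by_cases hxb : x = b
    · exact Or.inr (Or.inl hxb)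
    by_cases hxq : x = q
    · exact Or.inr (Or.inr (Or.inl hxq))
    refine Or.inr (Or.inr (Or.inr ⟨h, ?_⟩))
    rintro (rfl | rfl | rfl)
    · exact hxa rfl
    · exact hxb rfl
    · exact hxq rfl
  · rintro (rfl | rfl | rfl | h)
    · exact ha
    · exact hb
    · exact hq
    · exact h.1

end Main

section Languages

lemma wt_split {Δ : Fin 5 → ℝ} (S t : Finset (Fin 5)) :
    wt Δ S = wt Δ (S ∩ t) + wt Δ (S \ t) := by
  simp only [wt]
  rw [Finset.sum_inter_add_sum_sdiff]

lemma no_xnor : ¬ ∃ (G : SimpleGraph (Fin 5)) (Δ : Fin 5 → ℝ) (p : Fin 3 → Fin 5),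
    (∀ i, 0 < Δ i) ∧ Function.Injective p ∧ Realizes G Δ p LXNOR := by
  rintro ⟨G, Δ, p, hΔ, hp, hre⟩
  obtain ⟨S00, h00, m00⟩ := get_word hre (show ![false, false, true] ∈ LXNOR by simp [LXNOR])
  obtain ⟨S01, h01, m01⟩ := get_word hre (show ![false, true, false] ∈ LXNOR by simp [LXNOR])
  obtain ⟨S10, h10, m10⟩ := get_word hre (show ![true, false, false] ∈ LXNOR by simp [LXNOR])
  obtain ⟨S11, h11, m11⟩ := get_word hre (show ![true, true, true] ∈ LXNOR by simp [LXNOR])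
  set a := p 0 with ha_def
  set b := p 1 with hb_def
  set q := p 2 with hq_def
  have hab : a ≠ b := fun h => absurd (hp h) (by decide)
  have haq : a ≠ q := fun h => absurd (hp h) (by decide)
  have hbq : b ≠ q := fun h => absurd (hp h) (by decide)
  have ha10 : a ∈ S10 := (m10 0).2 rfl
  have hb10 : b ∉ S10 := fun h => absurd ((m10 1).1 h) (by decide)
  have hq10 : q ∉ S10 := fun h => absurd ((m10 2).1 h) (by decide)
  have ha01 : a ∉ S01 := fun h => absurd ((m01 0).1 h) (by decide)
  have hb01 : b ∈ S01 := (m01 1).2 rfl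
  have hq01 : q ∉ S01 := fun h => absurd ((m01 2).1 h) (by decide)
  have ha00 : a ∉ S00 := fun h => absurd ((m00 0).1 h) (by decide)
  have hb00 : b ∉ S00 := fun h => absurd ((m00 1).1 h) (by decide)
  have hq00 : q ∈ S00 := (m00 2).2 rfl
  have ha11 : a ∈ S11 := (m11 0).2 rfl
  have hb11 : b ∈ S11 := (m11 1).2 rfl
  have hq11 : q ∈ S11 := (m11 2).2 rfl
  have nab : ¬ G.Adj a b := h11.1 a ha11 b hb11
  have naq : ¬ G.Adj a q := h11.1 a ha11 q hq11
  have nbq : ¬ G.Adj b q := h11.1 b hb11 q hq11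
  set K : Finset (Fin 5) := Finset.univ \ {a, b, q} with hK_def
  have hKcard : K.card = 2 := by
    rw [hK_def, Finset.card_sdiff_of_subset (Finset.subset_univ _),
      Finset.card_insert_of_notMem (by simp [hab, haq]),
      Finset.card_insert_of_notMem (by simp [hbq]), Finset.card_singleton,
      Finset.card_univ]
    rfl
  set A := S10 \ {a, b, q} with hA_def
  set B := S01 \ {a, b, q} with hB_def
  set C := S00 \ {a, b, q} with hC_def
  set D := S11 \ {a, b, q} with hD_def
  have hAK : A ⊆ K := by
    rw [hA_def, hK_def]
    exact fun x hx => Finset.mem_sdiff.2 ⟨Finset.mem_univ x, (Finset.mem_sdiff.1 hx).2⟩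
  have hBK : B ⊆ K := by
    rw [hB_def, hK_def]
    exact fun x hx => Finset.mem_sdiff.2 ⟨Finset.mem_univ x, (Finset.mem_sdiff.1 hx).2⟩
  have hCK : C ⊆ K := by
    rw [hC_def, hK_def]
    exact fun x hx => Finset.mem_sdiff.2 ⟨Finset.mem_univ x, (Finset.mem_sdiff.1 hx).2⟩
  have i10 : S10 ∩ {a, b, q} = {a} := by
    ext x
    simp only [Finset.mem_inter, Finset.mem_insert, Finset.mem_singleton]
    constructor
    · rintro ⟨hxS, rfl | rfl | rfl⟩
      · rfl
      · exact absurd hxS hb10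
      · exact absurd hxS hq10
    · rintro rfl
      exact ⟨ha10, Or.inl rfl⟩
  have i01 : S01 ∩ {a, b, q} = {b} := by
    ext x
    simp only [Finset.mem_inter, Finset.mem_insert, Finset.mem_singleton]
    constructor
    · rintro ⟨hxS, rfl | rfl | rfl⟩
      · exact absurd hxS ha01
      · rfl
      · exact absurd hxS hq01
    · rintro rfl
      exact ⟨hb01, Or.inr (Or.inl rfl)⟩
  have i00 : S00 ∩ {a, b, q} = {q} := by
    ext x
    simp only [Finset.mem_inter, Finset.mem_insert, Finset.mem_singleton]
    constructor
    · rintro ⟨hxS, rfl | rfl | rfl⟩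
      · exact absurd hxS ha00
      · exact absurd hxS hb00
      · rfl
    · rintro rfl
      exact ⟨hq00, Or.inr (Or.inr rfl)⟩
  have i11 : S11 ∩ {a, b, q} = {a, b, q} := by
    refine Finset.inter_eq_right.2 ?_
    intro x hx
    simp only [Finset.mem_insert, Finset.mem_singleton] at hx
    rcases hx with rfl | rfl | rfl <;> assumption
  have e10 : wt Δ S10 = Δ a + wt Δ A := by
    rw [hA_def, wt_split S10 {a, b, q}, i10]
    congr 1
    simp [wt]
  have e01 : wt Δ S01 = Δ b + wt Δ B := by
    rw [hB_def, wt_split S01 {a, b, q}, i01]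
    congr 1
    simp [wt]
  have e00 : wt Δ S00 = Δ q + wt Δ C := by
    rw [hC_def, wt_split S00 {a, b, q}, i00]
    congr 1
    simp [wt]
  have e11 : wt Δ S11 = Δ a + Δ b + Δ q + wt Δ D := by
    rw [hD_def, wt_split S11 {a, b, q}, i11]
    congr 1
    rw [wt, Finset.sum_insert (by simp [hab, haq]), Finset.sum_insert (by simp [hbq]),
      Finset.sum_singleton]
    ring
  have weq : ∀ {X Y : Finset (Fin 5)}, IsMWIS G Δ X → IsMWIS G Δ Y → wt Δ X = wt Δ Y :=
    fun hX hY => le_antisymm (hY.2 _ hX.1) (hX.2 _ hY.1)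
  have w10 : wt Δ S10 = wt Δ S11 := weq h10 h11
  have w01 : wt Δ S01 = wt Δ S11 := weq h01 h11
  have w00 : wt Δ S00 = wt Δ S11 := weq h00 h11
  have hDnn : 0 ≤ wt Δ D := wt_nonneg hΔ D
  have hAne : A.Nonempty := pos_nonempty (Δ := Δ) (by
    have hb := hΔ b
    have hq := hΔ q
    linarith)
  have hBne : B.Nonempty := pos_nonempty (Δ := Δ) (by
    have ha := hΔ a
    have hq := hΔ q
    linarith)
  have hCne : C.Nonempty := pos_nonempty (Δ := Δ) (by
    have ha := hΔ a
    have hb := hΔ b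
    linarith)
  by_cases hABi : (A ∩ B).Nonempty
  · rcases nest hKcard hAK hBK hABi with hsub | hsub
    · refine pair_lem hΔ h10 h01.1 hb10 hb01 nab (sub_helper ?_ (Or.inl rfl)
        (Or.inr (Or.inl hb10)) (Or.inr (Or.inl hq10)))
      rw [hA_def, hB_def] at hsub
      exact hsub.trans Finset.sdiff_subset
    · refine pair_lem hΔ h01 h10.1 ha01 ha10 (fun h => nab h.symm) (sub_helper ?_
        (Or.inr (Or.inl ha01)) (Or.inl rfl) (Or.inr (Or.inl hq01)))
      rw [hA_def, hB_def] at hsub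
      exact hsub.trans Finset.sdiff_subset
  · have hABe : A ∩ B = ∅ := Finset.not_nonempty_iff_eq_empty.1 hABi
    have hUn : A ∪ B = K := union_eq hKcard hAK hBK hABe hAne hBne
    obtain ⟨x, hxC⟩ := hCne
    have hxK : x ∈ A ∪ B := by
      rw [hUn]
      exact hCK hxC
    rcases Finset.mem_union.1 hxK with hxA | hxB
    · rcases nest hKcard hCK hAK ⟨x, Finset.mem_inter.2 ⟨hxC, hxA⟩⟩ with hsub | hsub
      · refine pair_lem hΔ h00 h10.1 ha00 ha10 (fun h => naq h.symm) (sub_helper ?_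
          (Or.inr (Or.inl ha00)) (Or.inr (Or.inl hb00)) (Or.inl rfl))
        rw [hC_def, hA_def] at hsub
        exact hsub.trans Finset.sdiff_subset
      · refine pair_lem hΔ h10 h00.1 hq10 hq00 naq (sub_helper ?_
          (Or.inl rfl) (Or.inr (Or.inl hb10)) (Or.inr (Or.inr hq00)))
        rw [hC_def, hA_def] at hsub
        exact hsub.trans Finset.sdiff_subset
    · rcases nest hKcard hCK hBK ⟨x, Finset.mem_inter.2 ⟨hxC, hxB⟩⟩ with hsub | hsub
      · refine pair_lem hΔ h00 h01.1 hb00 hb01 (fun h => nbq h.symm) (sub_helper ?_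
          (Or.inr (Or.inl ha00)) (Or.inr (Or.inl hb00)) (Or.inl rfl))
        rw [hC_def, hB_def] at hsub
        exact hsub.trans Finset.sdiff_subset
      · refine pair_lem hΔ h01 h00.1 hq01 hq00 nbq (sub_helper ?_
          (Or.inr (Or.inl ha01)) (Or.inl rfl) (Or.inr (Or.inr hq00)))
        rw [hC_def, hB_def] at hsub
        exact hsub.trans Finset.sdiff_subset


lemma no_and : ¬ ∃ (G : SimpleGraph (Fin 5)) (Δ : Fin 5 → ℝ) (p : Fin 3 → Fin 5),
    (∀ i, 0 < Δ i) ∧ Function.Injective p ∧ Realizes G Δ p LAND := by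
  rintro ⟨G, Δ, p, hΔ, hp, hre⟩
  obtain ⟨S00, h00, m00⟩ := get_word hre (show ![false, false, false] ∈ LAND by simp [LAND])
  obtain ⟨S01, h01, m01⟩ := get_word hre (show ![false, true, false] ∈ LAND by simp [LAND])
  obtain ⟨S10, h10, m10⟩ := get_word hre (show ![true, false, false] ∈ LAND by simp [LAND])
  obtain ⟨S11, h11, m11⟩ := get_word hre (show ![true, true, true] ∈ LAND by simp [LAND])
  set a := p 0 with ha_def
  set b := p 1 with hb_def
  set q := p 2 with hq_def
  have hab : a ≠ b := fun h => absurd (hp h) (by decide)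
  have haq : a ≠ q := fun h => absurd (hp h) (by decide)
  have hbq : b ≠ q := fun h => absurd (hp h) (by decide)
  have ha10 : a ∈ S10 := (m10 0).2 rfl
  have hb10 : b ∉ S10 := fun h => absurd ((m10 1).1 h) (by decide)
  have hq10 : q ∉ S10 := fun h => absurd ((m10 2).1 h) (by decide)
  have ha01 : a ∉ S01 := fun h => absurd ((m01 0).1 h) (by decide)
  have hb01 : b ∈ S01 := (m01 1).2 rfl
  have hq01 : q ∉ S01 := fun h => absurd ((m01 2).1 h) (by decide)
  have ha00 : a ∉ S00 := fun h => absurd ((m00 0).1 h) (by decide)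
  have hb00 : b ∉ S00 := fun h => absurd ((m00 1).1 h) (by decide)
  have hq00 : q ∉ S00 := fun h => absurd ((m00 2).1 h) (by decide)
  have ha11 : a ∈ S11 := (m11 0).2 rfl
  have hb11 : b ∈ S11 := (m11 1).2 rfl
  have hq11 : q ∈ S11 := (m11 2).2 rfl
  have nab : ¬ G.Adj a b := h11.1 a ha11 b hb11
  set K : Finset (Fin 5) := Finset.univ \ {a, b, q} with hK_def
  have hKcard : K.card = 2 := by
    rw [hK_def, Finset.card_sdiff_of_subset (Finset.subset_univ _),
      Finset.card_insert_of_notMem (by simp [hab, haq]),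
      Finset.card_insert_of_notMem (by simp [hbq]), Finset.card_singleton,
      Finset.card_univ]
    rfl
  set A := S10 \ {a, b, q} with hA_def
  set B := S01 \ {a, b, q} with hB_def
  set C := S00 \ {a, b, q} with hC_def
  set D := S11 \ {a, b, q} with hD_def
  have hAK : A ⊆ K := by
    rw [hA_def, hK_def]
    exact fun x hx => Finset.mem_sdiff.2 ⟨Finset.mem_univ x, (Finset.mem_sdiff.1 hx).2⟩
  have hBK : B ⊆ K := by
    rw [hB_def, hK_def]
    exact fun x hx => Finset.mem_sdiff.2 ⟨Finset.mem_univ x, (Finset.mem_sdiff.1 hx).2⟩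
  have hCK : C ⊆ K := by
    rw [hC_def, hK_def]
    exact fun x hx => Finset.mem_sdiff.2 ⟨Finset.mem_univ x, (Finset.mem_sdiff.1 hx).2⟩
  have i10 : S10 ∩ {a, b, q} = {a} := by
    ext x
    simp only [Finset.mem_inter, Finset.mem_insert, Finset.mem_singleton]
    constructor
    · rintro ⟨hxS, rfl | rfl | rfl⟩
      · rfl
      · exact absurd hxS hb10
      · exact absurd hxS hq10
    · rintro rfl
      exact ⟨ha10, Or.inl rfl⟩
  have i01 : S01 ∩ {a, b, q} = {b} := by
    ext x
    simp only [Finset.mem_inter, Finset.mem_insert, Finset.mem_singleton]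
    constructor
    · rintro ⟨hxS, rfl | rfl | rfl⟩
      · exact absurd hxS ha01
      · rfl
      · exact absurd hxS hq01
    · rintro rfl
      exact ⟨hb01, Or.inr (Or.inl rfl)⟩
  have i11 : S11 ∩ {a, b, q} = {a, b, q} := by
    refine Finset.inter_eq_right.2 ?_
    intro x hx
    simp only [Finset.mem_insert, Finset.mem_singleton] at hx
    rcases hx with rfl | rfl | rfl <;> assumption
  have e10 : wt Δ S10 = Δ a + wt Δ A := by
    rw [hA_def, wt_split S10 {a, b, q}, i10]
    congr 1
    simp [wt]
  have e01 : wt Δ S01 = Δ b + wt Δ B := by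
    rw [hB_def, wt_split S01 {a, b, q}, i01]
    congr 1
    simp [wt]
  have e00 : wt Δ S00 = wt Δ C := by
    rw [hC_def, decomp0 ha00 hb00 hq00]
  have e11 : wt Δ S11 = Δ a + Δ b + Δ q + wt Δ D := by
    rw [hD_def, wt_split S11 {a, b, q}, i11]
    congr 1
    rw [wt, Finset.sum_insert (by simp [hab, haq]), Finset.sum_insert (by simp [hbq]),
      Finset.sum_singleton]
    ring
  have weq : ∀ {X Y : Finset (Fin 5)}, IsMWIS G Δ X → IsMWIS G Δ Y → wt Δ X = wt Δ Y :=
    fun hX hY => le_antisymm (hY.2 _ hX.1) (hX.2 _ hY.1)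
  have w10 : wt Δ S10 = wt Δ S11 := weq h10 h11
  have w01 : wt Δ S01 = wt Δ S11 := weq h01 h11
  have w00 : wt Δ S00 = wt Δ S11 := weq h00 h11
  have hDnn : 0 ≤ wt Δ D := wt_nonneg hΔ D
  have hAne : A.Nonempty := pos_nonempty (Δ := Δ) (by
    have hb := hΔ b
    have hq := hΔ q
    linarith)
  have hBne : B.Nonempty := pos_nonempty (Δ := Δ) (by
    have ha := hΔ a
    have hq := hΔ q
    linarith)
  by_cases hABi : (A ∩ B).Nonempty
  · rcases nest hKcard hAK hBK hABi with hsub | hsub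
    · refine pair_lem hΔ h10 h01.1 hb10 hb01 nab (sub_helper ?_ (Or.inl rfl)
        (Or.inr (Or.inl hb10)) (Or.inr (Or.inl hq10)))
      rw [hA_def, hB_def] at hsub
      exact hsub.trans Finset.sdiff_subset
    · refine pair_lem hΔ h01 h10.1 ha01 ha10 (fun h => nab h.symm) (sub_helper ?_
        (Or.inr (Or.inl ha01)) (Or.inl rfl) (Or.inr (Or.inl hq01)))
      rw [hA_def, hB_def] at hsub
      exact hsub.trans Finset.sdiff_subset
  · have hABe : A ∩ B = ∅ := Finset.not_nonempty_iff_eq_empty.1 hABi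
    have hUn : A ∪ B = K := union_eq hKcard hAK hBK hABe hAne hBne
    by_cases hCA : C ⊆ A
    · refine pair_lem hΔ h00 h10.1 ha00 ha10 G.irrefl (sub_helper ?_
        (Or.inl rfl) (Or.inr (Or.inl hb00)) (Or.inr (Or.inl hq00)))
      rw [hC_def, hA_def] at hCA
      exact hCA.trans Finset.sdiff_subset
    by_cases hCB : C ⊆ B
    · refine pair_lem hΔ h00 h01.1 hb00 hb01 G.irrefl (sub_helper ?_
        (Or.inr (Or.inl ha00)) (Or.inl rfl) (Or.inr (Or.inl hq00)))
      rw [hC_def, hB_def] at hCB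
      exact hCB.trans Finset.sdiff_subset
    obtain ⟨y, hyC, hyA⟩ := Finset.not_subset.1 hCA
    obtain ⟨z, hzC, hzB⟩ := Finset.not_subset.1 hCB
    have hyB : y ∈ B := by
      have h' : y ∈ A ∪ B := by
        rw [hUn]
        exact hCK hyC
      rcases Finset.mem_union.1 h' with h' | h'
      · exact absurd h' hyA
      · exact h'
    have hzA : z ∈ A := by
      have h' : z ∈ A ∪ B := by
        rw [hUn]
        exact hCK hzC
      rcases Finset.mem_union.1 h' with h' | h'
      · exact h'
      · exact absurd h' hzB
    have hAC : A ⊆ C := by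
      rcases nest hKcard hAK hCK ⟨z, Finset.mem_inter.2 ⟨hzA, hzC⟩⟩ with h' | h'
      · exact h'
      · exact absurd h' hCA
    have hBC : B ⊆ C := by
      rcases nest hKcard hBK hCK ⟨y, Finset.mem_inter.2 ⟨hyB, hyC⟩⟩ with h' | h'
      · exact h'
      · exact absurd h' hCB
    have hCeq : C = A ∪ B := by
      refine Finset.Subset.antisymm ?_ (Finset.union_subset hAC hBC)
      rw [hUn]
      exact hCK
    have eC : wt Δ C = wt Δ A + wt Δ B := by
      rw [hCeq]
      simp only [wt]
      exact Finset.sum_union (Finset.disjoint_iff_inter_eq_empty.2 hABe)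
    have hq' := hΔ q
    linarith

lemma no_or : ¬ ∃ (G : SimpleGraph (Fin 5)) (Δ : Fin 5 → ℝ) (p : Fin 3 → Fin 5),
    (∀ i, 0 < Δ i) ∧ Function.Injective p ∧ Realizes G Δ p LOR := by
  rintro ⟨G, Δ, p, hΔ, hp, hre⟩
  obtain ⟨S00, h00, m00⟩ := get_word hre (show ![false, false, false] ∈ LOR by simp [LOR])
  obtain ⟨S01, h01, m01⟩ := get_word hre (show ![false, true, true] ∈ LOR by simp [LOR])
  obtain ⟨S10, h10, m10⟩ := get_word hre (show ![true, false, true] ∈ LOR by simp [LOR])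
  obtain ⟨S11, h11, m11⟩ := get_word hre (show ![true, true, true] ∈ LOR by simp [LOR])
  set a := p 0 with ha_def
  set b := p 1 with hb_def
  set q := p 2 with hq_def
  have hab : a ≠ b := fun h => absurd (hp h) (by decide)
  have haq : a ≠ q := fun h => absurd (hp h) (by decide)
  have hbq : b ≠ q := fun h => absurd (hp h) (by decide)
  have ha10 : a ∈ S10 := (m10 0).2 rfl
  have hb10 : b ∉ S10 := fun h => absurd ((m10 1).1 h) (by decide)
  have hq10 : q ∈ S10 := (m10 2).2 rfl
  have ha01 : a ∉ S01 := fun h => absurd ((m01 0).1 h) (by decide)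
  have hb01 : b ∈ S01 := (m01 1).2 rfl
  have hq01 : q ∈ S01 := (m01 2).2 rfl
  have ha00 : a ∉ S00 := fun h => absurd ((m00 0).1 h) (by decide)
  have hb00 : b ∉ S00 := fun h => absurd ((m00 1).1 h) (by decide)
  have hq00 : q ∉ S00 := fun h => absurd ((m00 2).1 h) (by decide)
  have ha11 : a ∈ S11 := (m11 0).2 rfl
  have hb11 : b ∈ S11 := (m11 1).2 rfl
  have hq11 : q ∈ S11 := (m11 2).2 rfl
  have nab : ¬ G.Adj a b := h11.1 a ha11 b hb11
  set K : Finset (Fin 5) := Finset.univ \ {a, b, q} with hK_def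
  have hKcard : K.card = 2 := by
    rw [hK_def, Finset.card_sdiff_of_subset (Finset.subset_univ _),
      Finset.card_insert_of_notMem (by simp [hab, haq]),
      Finset.card_insert_of_notMem (by simp [hbq]), Finset.card_singleton,
      Finset.card_univ]
    rfl
  set A := S10 \ {a, b, q} with hA_def
  set B := S01 \ {a, b, q} with hB_def
  set C := S00 \ {a, b, q} with hC_def
  set D := S11 \ {a, b, q} with hD_def
  have hAK : A ⊆ K := by
    rw [hA_def, hK_def]
    exact fun x hx => Finset.mem_sdiff.2 ⟨Finset.mem_univ x, (Finset.mem_sdiff.1 hx).2⟩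
  have hBK : B ⊆ K := by
    rw [hB_def, hK_def]
    exact fun x hx => Finset.mem_sdiff.2 ⟨Finset.mem_univ x, (Finset.mem_sdiff.1 hx).2⟩
  have hCK : C ⊆ K := by
    rw [hC_def, hK_def]
    exact fun x hx => Finset.mem_sdiff.2 ⟨Finset.mem_univ x, (Finset.mem_sdiff.1 hx).2⟩
  have i10 : S10 ∩ {a, b, q} = {a, q} := by
    ext x
    simp only [Finset.mem_inter, Finset.mem_insert, Finset.mem_singleton]
    constructor
    · rintro ⟨hxS, rfl | rfl | rfl⟩
      · exact Or.inl rfl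
      · exact absurd hxS hb10
      · exact Or.inr rfl
    · rintro (rfl | rfl)
      · exact ⟨ha10, Or.inl rfl⟩
      · exact ⟨hq10, Or.inr (Or.inr rfl)⟩
  have i01 : S01 ∩ {a, b, q} = {b, q} := by
    ext x
    simp only [Finset.mem_inter, Finset.mem_insert, Finset.mem_singleton]
    constructor
    · rintro ⟨hxS, rfl | rfl | rfl⟩
      · exact absurd hxS ha01
      · exact Or.inl rfl
      · exact Or.inr rfl
    · rintro (rfl | rfl)
      · exact ⟨hb01, Or.inr (Or.inl rfl)⟩
      · exact ⟨hq01, Or.inr (Or.inr rfl)⟩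
  have i11 : S11 ∩ {a, b, q} = {a, b, q} := by
    refine Finset.inter_eq_right.2 ?_
    intro x hx
    simp only [Finset.mem_insert, Finset.mem_singleton] at hx
    rcases hx with rfl | rfl | rfl <;> assumption
  have e10 : wt Δ S10 = Δ a + Δ q + wt Δ A := by
    rw [hA_def, wt_split S10 {a, b, q}, i10]
    congr 1
    rw [wt, Finset.sum_insert (by simp [haq]), Finset.sum_singleton]
  have e01 : wt Δ S01 = Δ b + Δ q + wt Δ B := by
    rw [hB_def, wt_split S01 {a, b, q}, i01]
    congr 1
    rw [wt, Finset.sum_insert (by simp [hbq]), Finset.sum_singleton]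
  have e00 : wt Δ S00 = wt Δ C := by
    rw [hC_def, decomp0 ha00 hb00 hq00]
  have e11 : wt Δ S11 = Δ a + Δ b + Δ q + wt Δ D := by
    rw [hD_def, wt_split S11 {a, b, q}, i11]
    congr 1
    rw [wt, Finset.sum_insert (by simp [hab, haq]), Finset.sum_insert (by simp [hbq]),
      Finset.sum_singleton]
    ring
  have weq : ∀ {X Y : Finset (Fin 5)}, IsMWIS G Δ X → IsMWIS G Δ Y → wt Δ X = wt Δ Y :=
    fun hX hY => le_antisymm (hY.2 _ hX.1) (hX.2 _ hY.1)
  have w10 : wt Δ S10 = wt Δ S11 := weq h10 h11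
  have w01 : wt Δ S01 = wt Δ S11 := weq h01 h11
  have w00 : wt Δ S00 = wt Δ S11 := weq h00 h11
  have hDnn : 0 ≤ wt Δ D := wt_nonneg hΔ D
  have hAne : A.Nonempty := pos_nonempty (Δ := Δ) (by
    have hb := hΔ b
    linarith)
  have hBne : B.Nonempty := pos_nonempty (Δ := Δ) (by
    have ha := hΔ a
    linarith)
  by_cases hABi : (A ∩ B).Nonempty
  · rcases nest hKcard hAK hBK hABi with hsub | hsub
    · refine pair_lem hΔ h10 h01.1 hb10 hb01 nab (sub_helper ?_ (Or.inl rfl)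
        (Or.inr (Or.inl hb10)) (Or.inr (Or.inr hq01)))
      rw [hA_def, hB_def] at hsub
      exact hsub.trans Finset.sdiff_subset
    · refine pair_lem hΔ h01 h10.1 ha01 ha10 (fun h => nab h.symm) (sub_helper ?_
        (Or.inr (Or.inl ha01)) (Or.inl rfl) (Or.inr (Or.inr hq10)))
      rw [hA_def, hB_def] at hsub
      exact hsub.trans Finset.sdiff_subset
  · have hABe : A ∩ B = ∅ := Finset.not_nonempty_iff_eq_empty.1 hABi
    have hUn : A ∪ B = K := union_eq hKcard hAK hBK hABe hAne hBne
    by_cases hCA : C ⊆ A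
    · refine pair_lem hΔ h00 h10.1 ha00 ha10 G.irrefl (sub_helper ?_
        (Or.inl rfl) (Or.inr (Or.inl hb00)) (Or.inr (Or.inl hq00)))
      rw [hC_def, hA_def] at hCA
      exact hCA.trans Finset.sdiff_subset
    by_cases hCB : C ⊆ B
    · refine pair_lem hΔ h00 h01.1 hb00 hb01 G.irrefl (sub_helper ?_
        (Or.inr (Or.inl ha00)) (Or.inl rfl) (Or.inr (Or.inl hq00)))
      rw [hC_def, hB_def] at hCB
      exact hCB.trans Finset.sdiff_subset
    obtain ⟨y, hyC, hyA⟩ := Finset.not_subset.1 hCA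
    obtain ⟨z, hzC, hzB⟩ := Finset.not_subset.1 hCB
    have hyB : y ∈ B := by
      have h' : y ∈ A ∪ B := by
        rw [hUn]
        exact hCK hyC
      rcases Finset.mem_union.1 h' with h' | h'
      · exact absurd h' hyA
      · exact h'
    have hzA : z ∈ A := by
      have h' : z ∈ A ∪ B := by
        rw [hUn]
        exact hCK hzC
      rcases Finset.mem_union.1 h' with h' | h'
      · exact h'
      · exact absurd h' hzB
    have hAC : A ⊆ C := by
      rcases nest hKcard hAK hCK ⟨z, Finset.mem_inter.2 ⟨hzA, hzC⟩⟩ with h' | h'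
      · exact h'
      · exact absurd h' hCA
    have hBC : B ⊆ C := by
      rcases nest hKcard hBK hCK ⟨y, Finset.mem_inter.2 ⟨hyB, hyC⟩⟩ with h' | h'
      · exact h'
      · exact absurd h' hCB
    have hCeq : C = A ∪ B := by
      refine Finset.Subset.antisymm ?_ (Finset.union_subset hAC hBC)
      rw [hUn]
      exact hCK
    have key : ∀ y ∈ S00, ¬ G.Adj q y := by
      intro v hv
      have hvC : v ∈ C := by
        rw [hC_def, decomp0 ha00 hb00 hq00]
        exact hv
      rw [hCeq] at hvC
      rcases Finset.mem_union.1 hvC with h' | h'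
      · refine h10.1 q hq10 v ?_
        rw [hA_def] at h'
        exact Finset.sdiff_subset h'
      · refine h01.1 q hq01 v ?_
        rw [hB_def] at h'
        exact Finset.sdiff_subset h'
    refine insert_lem hΔ h00 hq00 ?_
    intro x hx y' hy'
    rcases Finset.mem_insert.1 hx with hxq | hx
    · rcases Finset.mem_insert.1 hy' with hyq | hy'
      · rw [hxq, hyq]
        exact G.irrefl
      · rw [hxq]
        exact key y' hy'
    · rcases Finset.mem_insert.1 hy' with hyq | hy'
      · rw [hyq]
        intro h
        exact key x hx h.symm
      · exact h00.1 x hx y' hy'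
end Languages
/-- There is no assignment of strictly positive weights to the path
`P₅` (vertices `0-1-2-3-4`) making its four maximal independent sets
`{0,2,4}, {0,3}, {1,4}, {1,3}` all of equal total weight; consequently AND, OR,
and XNOR gates cannot be realized as maximum-weight-independent-set complexes
on 5 vertices. -/
theorem no_and_or_xnor_on_five_atoms :
    (¬ ∃ Δ : Fin 5 → ℝ, (∀ i, 0 < Δ i) ∧
      wt Δ {0, 2, 4} = wt Δ {0, 3} ∧ wt Δ {0, 3} = wt Δ {1, 4} ∧
      wt Δ {1, 4} = wt Δ {1, 3}) ∧
    (∀ L ∈ ({LAND, LOR, LXNOR} : Set (Set (Fin 3 → Bool))),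
      ¬ ∃ (G : SimpleGraph (Fin 5)) (Δ : Fin 5 → ℝ) (p : Fin 3 → Fin 5),
        (∀ i, 0 < Δ i) ∧ Function.Injective p ∧ Realizes G Δ p L) := by
  constructor
  · rintro ⟨Δ, hΔ, h1, h2, h3⟩
    have e1 : wt Δ {0, 2, 4} = Δ 0 + Δ 2 + Δ 4 := by
      rw [wt, Finset.sum_insert (by decide), Finset.sum_insert (by decide),
        Finset.sum_singleton]
      ring
    have e2 : wt Δ {0, 3} = Δ 0 + Δ 3 := by
      rw [wt, Finset.sum_insert (by decide), Finset.sum_singleton]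
    have e3 : wt Δ {1, 4} = Δ 1 + Δ 4 := by
      rw [wt, Finset.sum_insert (by decide), Finset.sum_singleton]
    have e4 : wt Δ {1, 3} = Δ 1 + Δ 3 := by
      rw [wt, Finset.sum_insert (by decide), Finset.sum_singleton]
    rw [e1, e2] at h1
    rw [e2, e3] at h2
    rw [e3, e4] at h3
    have := hΔ 2
    linarith
  · intro L hL
    simp only [Set.mem_insert_iff, Set.mem_singleton_iff] at hL
    rcases hL with rfl | rfl | rfl
    · exact no_and
    · exact no_or
    · exact no_xnor
end

section
/- If a vertex-weighted graph with strictly positive weights has designated ports A, B, Q that are pairwise non-adjacent, and its maximum-weight independent sets restricted to ports are in bijection with a language containing {110, 101, 011}, then the graph has at least 4 non-port vertices whenever it realizes the NAND language {001, 011, 101, 110} or the XOR language {000, 011, 101, 110}; i.e., NAND- and XOR-complexes require at least 7 atoms. -/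
open Finset
open scoped Classical

/-- The NAND language: truth table of `Q = ¬(A ∧ B)`, letters ordered `(A, B, Q)`. -/
def LNAND : Set (Fin 3 → Bool) :=
  {![false, false, true], ![false, true, true], ![true, false, true],
    ![true, true, false]}

/-- The XOR language: truth table of `Q = A XOR B`. -/
def LXOR : Set (Fin 3 → Bool) :=
  {![false, false, false], ![false, true, true], ![true, false, true],
    ![true, true, false]}

section Test
variable {V : Type*} {G : SimpleGraph V} {Δ : V → ℝ}

lemma mwis_wt_eq' {S T : Finset V} (hS : IsMWIS G Δ S) (hT : IsMWIS G Δ T) :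
    wt Δ S = wt Δ T :=
  le_antisymm (hT.2 S hS.1) (hS.2 T hT.1)

lemma mwis_exists_adj' (hΔ : ∀ v, 0 < Δ v) {S : Finset V} (hS : IsMWIS G Δ S)
    {v : V} (hv : v ∉ S) : ∃ u ∈ S, G.Adj v u := by
  by_contra h
  push_neg at h
  have hind : IsIndepSet' G (insert v S) := by
    intro i hi j hj
    simp only [Finset.mem_insert] at hi hj
    rcases hi with rfl | hi
    · rcases hj with rfl | hj
      · exact G.irrefl
      · exact h j hj
    · rcases hj with rfl | hj
      · intro hadj; exact h i hi hadj.symm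
      · exact hS.1 i hi j hj
  have h1 := hS.2 _ hind
  have h2 : wt Δ (insert v S) = Δ v + wt Δ S := by
    rw [wt, wt, Finset.sum_insert hv]
  have h3 := hΔ v
  linarith

lemma portInd_true' {ι : Type*} {ports : ι → V} {S : Finset V} {i : ι}
    (h : portInd ports S i = true) : ports i ∈ S := by
  by_contra hc; simp [portInd, hc] at h

lemma portInd_false' {ι : Type*} {ports : ι → V} {S : Finset V} {i : ι}
    (h : portInd ports S i = false) : ports i ∉ S := by
  intro hc; simp [portInd, hc] at h

lemma wt_triple' {x y z : V} (hxy : x ≠ y) (hxz : x ≠ z) (hyz : y ≠ z) :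
    wt Δ ({x, y, z} : Finset V) = Δ x + Δ y + Δ z := by
  rw [wt, Finset.sum_insert (by simp [hxy, hxz]),
    Finset.sum_insert (by simp [hyz]), Finset.sum_singleton]
  ring

example : (![true,true,false] : Fin 3 → Bool) ∈ LNAND := by simp [LNAND]
example : (![true,true,true] : Fin 3 → Bool) ∉ LNAND := by
  simp only [LNAND, Set.mem_insert_iff, Set.mem_singleton_iff]; decide
example : (![false,false,true] : Fin 3 → Bool) 0 = false := rfl
end Test

section Key
variable {W0 : Type}

lemma wt_pair' {V : Type*} {Δ : V → ℝ} {x y : V} (hxy : x ≠ y) :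
    wt Δ ({x, y} : Finset V) = Δ x + Δ y := by
  rw [wt, Finset.sum_insert (by simp [hxy]), Finset.sum_singleton]

lemma wt_single' {V : Type*} {Δ : V → ℝ} {x : V} :
    wt Δ ({x} : Finset V) = Δ x := Finset.sum_singleton _ _

set_option maxHeartbeats 2000000 in
lemma key_lemma (V : Type) [Fintype V]
    (G : SimpleGraph V) (Δ : V → ℝ) (p : Fin 3 → V)
    (hΔ : ∀ v, 0 < Δ v) (hp : Function.Injective p)
    (hnadj : ∀ i j : Fin 3, i ≠ j → ¬ G.Adj (p i) (p j))
    (L : Set (Fin 3 → Bool)) (hreal : Realizes G Δ p L)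
    (h110 : ![true,true,false] ∈ L) (h101 : ![true,false,true] ∈ L)
    (h011 : ![false,true,true] ∈ L) (h111 : ![true,true,true] ∉ L)
    (w : Fin 3 → Bool) (hw : w ∈ L) (hw0 : w 0 = false) (hw1 : w 1 = false) :
    7 ≤ Fintype.card V := by
  by_contra hcard
  push_neg at hcard
  obtain ⟨S1, hS1, hI1⟩ := hreal.2.1 _ h110
  obtain ⟨S2, hS2, hI2⟩ := hreal.2.1 _ h101
  obtain ⟨S3, hS3, hI3⟩ := hreal.2.1 _ h011
  obtain ⟨S0, hS0, hI0⟩ := hreal.2.1 _ hw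
  have m10 : p 0 ∈ S1 := portInd_true' (by rw [hI1]; rfl)
  have m11 : p 1 ∈ S1 := portInd_true' (by rw [hI1]; rfl)
  have m12 : p 2 ∉ S1 := portInd_false' (by rw [hI1]; rfl)
  have m20 : p 0 ∈ S2 := portInd_true' (by rw [hI2]; rfl)
  have m21 : p 1 ∉ S2 := portInd_false' (by rw [hI2]; rfl)
  have m22 : p 2 ∈ S2 := portInd_true' (by rw [hI2]; rfl)
  have m30 : p 0 ∉ S3 := portInd_false' (by rw [hI3]; rfl)
  have m31 : p 1 ∈ S3 := portInd_true' (by rw [hI3]; rfl)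
  have m32 : p 2 ∈ S3 := portInd_true' (by rw [hI3]; rfl)
  have m00 : p 0 ∉ S0 := portInd_false' (by rw [hI0]; exact hw0)
  have m01 : p 1 ∉ S0 := portInd_false' (by rw [hI0]; exact hw1)
  set W := wt Δ S1 with hWdef
  have hmax : ∀ T : Finset V, IsIndepSet' G T → wt Δ T ≤ W := hS1.2
  have hW2 : wt Δ S2 = W := mwis_wt_eq' hS2 hS1
  have hW3 : wt Δ S3 = W := mwis_wt_eq' hS3 hS1
  have hW0 : wt Δ S0 = W := mwis_wt_eq' hS0 hS1
  have hne01 : p 0 ≠ p 1 := fun h => absurd (hp h) (by decide)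
  have hne02 : p 0 ≠ p 2 := fun h => absurd (hp h) (by decide)
  have hne12 : p 1 ≠ p 2 := fun h => absurd (hp h) (by decide)
  -- ports form an independent set of weight < W
  have hPind : IsIndepSet' G ({p 0, p 1, p 2} : Finset V) := by
    intro i hi j hj
    simp only [Finset.mem_insert, Finset.mem_singleton] at hi hj
    rcases hi with rfl|rfl|rfl <;> rcases hj with rfl|rfl|rfl <;>
      first
        | exact G.irrefl
        | exact hnadj _ _ (by decide)
  have hPlt : Δ (p 0) + Δ (p 1) + Δ (p 2) < W := by
    rcases lt_or_eq_of_le (hmax _ hPind) with h | h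
    · rwa [wt_triple' hne01 hne02 hne12] at h
    · exfalso
      have hm : IsMWIS G Δ ({p 0, p 1, p 2} : Finset V) :=
        ⟨hPind, fun T hT => by rw [h]; exact hmax T hT⟩
      have hmem := hreal.1 _ hm
      have hpi : portInd p ({p 0, p 1, p 2} : Finset V) = ![true,true,true] := by
        funext i
        fin_cases i <;> simp [portInd]
      rw [hpi] at hmem
      exact h111 hmem
  -- the three extra vertices
  obtain ⟨q', hq'S1, hq'adj⟩ := mwis_exists_adj' hΔ hS1 m12
  obtain ⟨b', hb'S2, hb'adj⟩ := mwis_exists_adj' hΔ hS2 m21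
  obtain ⟨a', ha'S3, ha'adj⟩ := mwis_exists_adj' hΔ hS3 m30
  have ha'0 : a' ≠ p 0 := by intro h; rw [h] at ha'adj; exact G.irrefl ha'adj
  have ha'1 : a' ≠ p 1 := by intro h; rw [h] at ha'adj; exact hnadj 0 1 (by decide) ha'adj
  have ha'2 : a' ≠ p 2 := by intro h; rw [h] at ha'adj; exact hnadj 0 2 (by decide) ha'adj
  have hb'0 : b' ≠ p 0 := by intro h; rw [h] at hb'adj; exact hnadj 1 0 (by decide) hb'adj
  have hb'1 : b' ≠ p 1 := by intro h; rw [h] at hb'adj; exact G.irrefl hb'adj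
  have hb'2 : b' ≠ p 2 := by intro h; rw [h] at hb'adj; exact hnadj 1 2 (by decide) hb'adj
  have hq'0 : q' ≠ p 0 := by intro h; rw [h] at hq'adj; exact hnadj 2 0 (by decide) hq'adj
  have hq'1 : q' ≠ p 1 := by intro h; rw [h] at hq'adj; exact hnadj 2 1 (by decide) hq'adj
  have hq'2 : q' ≠ p 2 := by intro h; rw [h] at hq'adj; exact G.irrefl hq'adj
  have ha'nS1 : a' ∉ S1 := fun h => hS1.1 _ m10 _ h ha'adj
  have ha'nS2 : a' ∉ S2 := fun h => hS2.1 _ m20 _ h ha'adj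
  have hb'nS1 : b' ∉ S1 := fun h => hS1.1 _ m11 _ h hb'adj
  have hb'nS3 : b' ∉ S3 := fun h => hS3.1 _ m31 _ h hb'adj
  have hq'nS2 : q' ∉ S2 := fun h => hS2.1 _ m22 _ h hq'adj
  have hq'nS3 : q' ∉ S3 := fun h => hS3.1 _ m32 _ h hq'adj
  have hab' : a' ≠ b' := by intro h; rw [h] at ha'nS2; exact ha'nS2 hb'S2
  have haq' : a' ≠ q' := by intro h; rw [h] at ha'nS1; exact ha'nS1 hq'S1
  have hbq' : b' ≠ q' := by intro h; rw [h] at hb'nS1; exact hb'nS1 hq'S1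
  -- non-adjacency facts from co-membership
  have nAa1 : ¬ G.Adj a' (p 1) := fun h => hS3.1 _ ha'S3 _ m31 h
  have nAa2 : ¬ G.Adj a' (p 2) := fun h => hS3.1 _ ha'S3 _ m32 h
  have nAb0 : ¬ G.Adj b' (p 0) := fun h => hS2.1 _ hb'S2 _ m20 h
  have nAb2 : ¬ G.Adj b' (p 2) := fun h => hS2.1 _ hb'S2 _ m22 h
  have nAq0 : ¬ G.Adj q' (p 0) := fun h => hS1.1 _ hq'S1 _ m10 h
  have nAq1 : ¬ G.Adj q' (p 1) := fun h => hS1.1 _ hq'S1 _ m11 h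
  -- pigeonhole: every vertex is one of the six
  have hPcard : ({p 0, p 1, p 2} : Finset V).card = 3 := by
    rw [Finset.card_insert_of_notMem (by simp [hne01, hne02]),
      Finset.card_insert_of_notMem (by simp [hne12]), Finset.card_singleton]
  have hMsub : ({a', b', q'} : Finset V) ⊆ ({p 0, p 1, p 2} : Finset V)ᶜ := by
    intro v hv
    simp only [Finset.mem_insert, Finset.mem_singleton] at hv
    rw [Finset.mem_compl]
    rcases hv with rfl|rfl|rfl <;>
      simp [ha'0, ha'1, ha'2, hb'0, hb'1, hb'2, hq'0, hq'1, hq'2]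
  have hMcard : ({a', b', q'} : Finset V).card = 3 := by
    rw [Finset.card_insert_of_notMem (by simp [hab', haq']),
      Finset.card_insert_of_notMem (by simp [hbq']), Finset.card_singleton]
  have hcompl : (({p 0, p 1, p 2} : Finset V)ᶜ).card ≤ 3 := by
    have h1 := Finset.card_compl ({p 0, p 1, p 2} : Finset V)
    omega
  have hMeq : ({a', b', q'} : Finset V) = ({p 0, p 1, p 2} : Finset V)ᶜ :=
    Finset.eq_of_subset_of_card_le hMsub (by omega)
  have hclass : ∀ v : V, v = p 0 ∨ v = p 1 ∨ v = p 2 ∨ v = a' ∨ v = b' ∨ v = q' := by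
    intro v
    by_cases h : v ∈ ({p 0, p 1, p 2} : Finset V)
    · simp only [Finset.mem_insert, Finset.mem_singleton] at h; tauto
    · have hv : v ∈ ({a', b', q'} : Finset V) := by
        rw [hMeq]; exact Finset.mem_compl.2 h
      simp only [Finset.mem_insert, Finset.mem_singleton] at hv; tauto
  -- exact descriptions of S1, S2, S3
  have hS1eq : S1 = ({p 0, p 1, q'} : Finset V) := by
    apply Finset.Subset.antisymm
    · intro v hv
      simp only [Finset.mem_insert, Finset.mem_singleton]
      rcases hclass v with rfl|rfl|rfl|rfl|rfl|rfl
      · tauto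
      · tauto
      · exact absurd hv m12
      · exact absurd hv ha'nS1
      · exact absurd hv hb'nS1
      · tauto
    · intro v hv
      simp only [Finset.mem_insert, Finset.mem_singleton] at hv
      rcases hv with rfl|rfl|rfl
      · exact m10
      · exact m11
      · exact hq'S1
  have hS2eq : S2 = ({p 0, p 2, b'} : Finset V) := by
    apply Finset.Subset.antisymm
    · intro v hv
      simp only [Finset.mem_insert, Finset.mem_singleton]
      rcases hclass v with rfl|rfl|rfl|rfl|rfl|rfl
      · tauto
      · exact absurd hv m21
      · tauto
      · exact absurd hv ha'nS2
      · tauto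
      · exact absurd hv hq'nS2
    · intro v hv
      simp only [Finset.mem_insert, Finset.mem_singleton] at hv
      rcases hv with rfl|rfl|rfl
      · exact m20
      · exact m22
      · exact hb'S2
  have hS3eq : S3 = ({p 1, p 2, a'} : Finset V) := by
    apply Finset.Subset.antisymm
    · intro v hv
      simp only [Finset.mem_insert, Finset.mem_singleton]
      rcases hclass v with rfl|rfl|rfl|rfl|rfl|rfl
      · exact absurd hv m30
      · tauto
      · tauto
      · tauto
      · exact absurd hv hb'nS3
      · exact absurd hv hq'nS3
    · intro v hv
      simp only [Finset.mem_insert, Finset.mem_singleton] at hv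
      rcases hv with rfl|rfl|rfl
      · exact m31
      · exact m32
      · exact ha'S3
  -- weight equalities
  have e1 : Δ (p 0) + Δ (p 1) + Δ q' = W := by
    rw [hWdef, hS1eq, wt_triple' hne01 hq'0.symm hq'1.symm]
  have e2 : Δ (p 0) + Δ (p 2) + Δ b' = W := by
    rw [← hW2, hS2eq, wt_triple' hne02 hb'0.symm hb'2.symm]
  have e3 : Δ (p 1) + Δ (p 2) + Δ a' = W := by
    rw [← hW3, hS3eq, wt_triple' hne12 ha'1.symm ha'2.symm]
  -- a', b', q' are pairwise adjacent
  have hab : G.Adj a' b' := by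
    by_contra hn
    have hTind : IsIndepSet' G ({p 2, a', b'} : Finset V) := by
      intro i hi j hj
      simp only [Finset.mem_insert, Finset.mem_singleton] at hi hj
      rcases hi with rfl|rfl|rfl <;> rcases hj with rfl|rfl|rfl
      · exact G.irrefl
      · exact fun h => nAa2 h.symm
      · exact fun h => nAb2 h.symm
      · exact nAa2
      · exact G.irrefl
      · exact hn
      · exact nAb2
      · exact fun h => hn h.symm
      · exact G.irrefl
    have hle := hmax _ hTind
    rw [wt_triple' ha'2.symm hb'2.symm hab'] at hle
    linarith
  have haq : G.Adj a' q' := by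
    by_contra hn
    have hTind : IsIndepSet' G ({p 1, a', q'} : Finset V) := by
      intro i hi j hj
      simp only [Finset.mem_insert, Finset.mem_singleton] at hi hj
      rcases hi with rfl|rfl|rfl <;> rcases hj with rfl|rfl|rfl
      · exact G.irrefl
      · exact fun h => nAa1 h.symm
      · exact fun h => nAq1 h.symm
      · exact nAa1
      · exact G.irrefl
      · exact hn
      · exact nAq1
      · exact fun h => hn h.symm
      · exact G.irrefl
    have hle := hmax _ hTind
    rw [wt_triple' ha'1.symm hq'1.symm haq'] at hle
    linarith
  have hbq : G.Adj b' q' := by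
    by_contra hn
    have hTind : IsIndepSet' G ({p 0, b', q'} : Finset V) := by
      intro i hi j hj
      simp only [Finset.mem_insert, Finset.mem_singleton] at hi hj
      rcases hi with rfl|rfl|rfl <;> rcases hj with rfl|rfl|rfl
      · exact G.irrefl
      · exact fun h => nAb0 h.symm
      · exact fun h => nAq0 h.symm
      · exact nAb0
      · exact G.irrefl
      · exact hn
      · exact nAq0
      · exact fun h => hn h.symm
      · exact G.irrefl
    have hle := hmax _ hTind
    rw [wt_triple' hb'0.symm hq'0.symm hbq'] at hle
    linarith
  -- final contradiction via S0
  have hmono : ∀ T : Finset V, S0 ⊆ T → wt Δ S0 ≤ wt Δ T := fun T hT =>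
    Finset.sum_le_sum_of_subset_of_nonneg hT (fun v _ _ => (hΔ v).le)
  rcases (Bool.eq_false_or_eq_true (w 2)).symm with hw2 | hw2
  · -- w 2 = false : no ports in S0
    have m02 : p 2 ∉ S0 := portInd_false' (by rw [hI0]; exact hw2)
    by_cases ha : a' ∈ S0
    · have hb : b' ∉ S0 := fun h => hS0.1 _ ha _ h hab
      have hq : q' ∉ S0 := fun h => hS0.1 _ ha _ h haq
      have hsub : S0 ⊆ ({a'} : Finset V) := by
        intro v hv
        simp only [Finset.mem_singleton]
        rcases hclass v with rfl|rfl|rfl|rfl|rfl|rfl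
        · exact absurd hv m00
        · exact absurd hv m01
        · exact absurd hv m02
        · rfl
        · exact absurd hv hb
        · exact absurd hv hq
      have := hmono _ hsub
      rw [wt_single', hW0] at this
      have h0 := hΔ (p 1); have h1 := hΔ (p 2)
      linarith
    · by_cases hb : b' ∈ S0
      · have hq : q' ∉ S0 := fun h => hS0.1 _ hb _ h hbq
        have hsub : S0 ⊆ ({b'} : Finset V) := by
          intro v hv
          simp only [Finset.mem_singleton]
          rcases hclass v with rfl|rfl|rfl|rfl|rfl|rfl
          · exact absurd hv m00
          · exact absurd hv m01
          · exact absurd hv m02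
          · exact absurd hv ha
          · rfl
          · exact absurd hv hq
        have := hmono _ hsub
        rw [wt_single', hW0] at this
        have h0 := hΔ (p 0); have h1 := hΔ (p 2)
        linarith
      · have hsub : S0 ⊆ ({q'} : Finset V) := by
          intro v hv
          simp only [Finset.mem_singleton]
          rcases hclass v with rfl|rfl|rfl|rfl|rfl|rfl
          · exact absurd hv m00
          · exact absurd hv m01
          · exact absurd hv m02
          · exact absurd hv ha
          · exact absurd hv hb
          · rfl
        have := hmono _ hsub
        rw [wt_single', hW0] at this
        have h0 := hΔ (p 0); have h1 := hΔ (p 1)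
        linarith
  · -- w 2 = true : Q ∈ S0
    have m02 : p 2 ∈ S0 := portInd_true' (by rw [hI0]; exact hw2)
    have hq : q' ∉ S0 := fun h => hS0.1 _ m02 _ h hq'adj
    by_cases ha : a' ∈ S0
    · have hb : b' ∉ S0 := fun h => hS0.1 _ ha _ h hab
      have hsub : S0 ⊆ ({p 2, a'} : Finset V) := by
        intro v hv
        simp only [Finset.mem_insert, Finset.mem_singleton]
        rcases hclass v with rfl|rfl|rfl|rfl|rfl|rfl
        · exact absurd hv m00
        · exact absurd hv m01
        · tauto
        · tauto
        · exact absurd hv hb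
        · exact absurd hv hq
      have := hmono _ hsub
      rw [wt_pair' ha'2.symm, hW0] at this
      have h0 := hΔ (p 1)
      linarith
    · have hsub : S0 ⊆ ({p 2, b'} : Finset V) := by
        intro v hv
        simp only [Finset.mem_insert, Finset.mem_singleton]
        rcases hclass v with rfl|rfl|rfl|rfl|rfl|rfl
        · exact absurd hv m00
        · exact absurd hv m01
        · tauto
        · exact absurd hv ha
        · tauto
        · exact absurd hv hq
      have := hmono _ hsub
      rw [wt_pair' hb'2.symm, hW0] at this
      have h0 := hΔ (p 0)
      linarith
end Key


/-- A complex with strictly positive weights and pairwise non-adjacent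
ports `A, B, Q` realizing the NAND language `{001, 011, 101, 110}` or the XOR
language `{000, 011, 101, 110}` has at least 4 non-port vertices, i.e., at least
7 atoms in total. -/
theorem nand_xor_need_seven_atoms (V : Type) [Fintype V]
    (G : SimpleGraph V) (Δ : V → ℝ) (p : Fin 3 → V)
    (hΔ : ∀ v, 0 < Δ v) (hp : Function.Injective p)
    (hnadj : ∀ i j : Fin 3, i ≠ j → ¬ G.Adj (p i) (p j))
    (hreal : Realizes G Δ p LNAND ∨ Realizes G Δ p LXOR) :
    7 ≤ Fintype.card V := by
  rcases hreal with h | h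
  · exact key_lemma V G Δ p hΔ hp hnadj LNAND h
      (by simp [LNAND]) (by simp [LNAND]) (by simp [LNAND])
      (by simp only [LNAND, Set.mem_insert_iff, Set.mem_singleton_iff]; decide)
      ![false, false, true] (by simp [LNAND]) rfl rfl
  · exact key_lemma V G Δ p hΔ hp hnadj LXOR h
      (by simp [LXOR]) (by simp [LXOR]) (by simp [LXOR])
      (by simp only [LXOR, Set.mem_insert_iff, Set.mem_singleton_iff]; decide)
      ![false, false, false] (by simp [LXOR]) rfl rfl
end

section
/- Let C be a finite vertex-weighted graph with strictly positive weights whose maximum-weight independent sets realize an irreducible language L on pairwise non-adjacent ports, and let p be a port with weight Δ_p appearing active in at least one ground state. Then the graph C'_p obtained by deleting p and all vertices adjacent to p realizes exactly the language L'_p obtained from {x ∈ L : x_p = 1} by deleting the letter at position p, on the inherited ports; moreover the maximum independent-set weight of C'_p equals that of C minus Δ_p. -/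
open Finset
open scoped Classical

/-- A language is irreducible if it is not a concatenation product of two languages
on complementary nonempty subsets of letter positions. -/
def IrreducibleLang {ι : Type*} (L : Set (ι → Bool)) : Prop :=
  ¬ ∃ A : Set ι, A.Nonempty ∧ Aᶜ.Nonempty ∧
    L = {x | (∃ y ∈ L, ∀ i ∈ A, x i = y i) ∧ (∃ z ∈ L, ∀ i ∈ Aᶜ, x i = z i)}

/-- Fixing an active port and deleting it together with its
neighbors yields a complex realizing the corresponding sub-language, and the
maximum independent-set weight drops exactly by the detuning of that port. -/
theorem subcomplex_construction {V ι : Type} [Fintype V]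
    (G : SimpleGraph V) (Δ : V → ℝ) (hΔ : ∀ v, 0 < Δ v)
    (p : ι → V) (hp : Function.Injective p)
    (hnadj : ∀ i j : ι, i ≠ j → ¬ G.Adj (p i) (p j))
    (L : Set (ι → Bool)) (hirr : IrreducibleLang L)
    (hreal : Realizes G Δ p L) (q : ι)
    (hq : ∃ S, IsMWIS G Δ S ∧ p q ∈ S) :
    Realizes
      (G.comap (Subtype.val : {v : V // v ≠ p q ∧ ¬ G.Adj (p q) v} → V))
      (fun v : {v : V // v ≠ p q ∧ ¬ G.Adj (p q) v} => Δ v.1)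
      (fun i : {i : ι // i ≠ q} =>
        (⟨p i.1, fun h => i.2 (hp h), hnadj q i.1 (fun e => i.2 e.symm)⟩ :
          {v : V // v ≠ p q ∧ ¬ G.Adj (p q) v}))
      {y : {i : ι // i ≠ q} → Bool |
        ∃ x ∈ L, x q = true ∧ ∀ i : {i : ι // i ≠ q}, y i = x i.1} ∧
    ∀ (S : Finset V) (S' : Finset {v : V // v ≠ p q ∧ ¬ G.Adj (p q) v}),
      IsMWIS G Δ S →
      IsMWIS (G.comap (Subtype.val : {v : V // v ≠ p q ∧ ¬ G.Adj (p q) v} → V))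
        (fun v => Δ v.1) S' →
      wt (fun v : {v : V // v ≠ p q ∧ ¬ G.Adj (p q) v} => Δ v.1) S' =
        wt Δ S - Δ (p q) := by
  classical
  obtain ⟨S₀, hS₀, hpq₀⟩ := hq
  have iteEq : ∀ (c d : Prop) (_ : Decidable c) (_ : Decidable d), (c ↔ d) →
      ((if c then true else false) = (if d then true else false)) := by
    intro c d hc hd h
    by_cases hcc : c
    · rw [if_pos hcc, if_pos (h.1 hcc)]
    · rw [if_neg hcc, if_neg (fun hdd => hcc (h.2 hdd))]
  -- abbreviations via have-lemmas
  -- extension of an independent set of the subcomplex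
  have extIndep : ∀ S' : Finset {v : V // v ≠ p q ∧ ¬ G.Adj (p q) v},
      IsIndepSet' (G.comap Subtype.val) S' →
      IsIndepSet' G (insert (p q) (S'.image Subtype.val)) := by
    intro S' h i hi j hj
    simp only [Finset.mem_insert, Finset.mem_image] at hi hj
    rcases hi with rfl | ⟨a, ha, rfl⟩
    · rcases hj with rfl | ⟨b, hb, rfl⟩
      · exact G.irrefl
      · exact b.2.2
    · rcases hj with rfl | ⟨b, hb, rfl⟩
      · intro hadj; exact a.2.2 hadj.symm
      · exact h a ha b hb
  have extWt : ∀ S' : Finset {v : V // v ≠ p q ∧ ¬ G.Adj (p q) v},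
      wt Δ (insert (p q) (S'.image Subtype.val))
        = wt (fun v : {v : V // v ≠ p q ∧ ¬ G.Adj (p q) v} => Δ v.1) S' + Δ (p q) := by
    intro S'
    have hnot : p q ∉ S'.image Subtype.val := by
      simp only [Finset.mem_image]
      rintro ⟨a, _, ha⟩
      exact a.2.1 ha
    rw [wt, Finset.sum_insert hnot,
      Finset.sum_image (fun a _ b _ h => Subtype.ext h)]
    rw [wt]; ring
  -- truncation
  have truncIndep : ∀ S : Finset V, IsIndepSet' G S →
      IsIndepSet' (G.comap Subtype.val)
        (S.subtype (fun v => v ≠ p q ∧ ¬ G.Adj (p q) v)) := by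
    intro S hS i hi j hj
    rw [Finset.mem_subtype] at hi hj
    exact hS i.1 hi j.1 hj
  have truncWt : ∀ S : Finset V, IsIndepSet' G S → p q ∈ S →
      wt (fun v : {v : V // v ≠ p q ∧ ¬ G.Adj (p q) v} => Δ v.1)
        (S.subtype (fun v => v ≠ p q ∧ ¬ G.Adj (p q) v)) = wt Δ S - Δ (p q) := by
    intro S hS hmem
    have h1 : wt (fun v : {v : V // v ≠ p q ∧ ¬ G.Adj (p q) v} => Δ v.1)
        (S.subtype (fun v => v ≠ p q ∧ ¬ G.Adj (p q) v))
        = ∑ v ∈ S.filter (fun v => v ≠ p q ∧ ¬ G.Adj (p q) v), Δ v := by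
      rw [wt]
      exact Finset.sum_subtype_eq_sum_filter _
    have h2 : S.filter (fun v => v ≠ p q ∧ ¬ G.Adj (p q) v) = S.erase (p q) := by
      ext v
      simp only [Finset.mem_filter, Finset.mem_erase]
      constructor
      · rintro ⟨hv, hne, -⟩; exact ⟨hne, hv⟩
      · rintro ⟨hne, hv⟩; exact ⟨hv, hne, hS (p q) hmem v hv⟩
    have h3 : Δ (p q) + ∑ v ∈ S.erase (p q), Δ v = ∑ v ∈ S, Δ v :=
      Finset.add_sum_erase S Δ hmem
    rw [h1, h2, wt]; linarith
  have hW : ∀ S, IsMWIS G Δ S → wt Δ S = wt Δ S₀ :=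
    fun S hS => le_antisymm (hS₀.2 S hS.1) (hS.2 S₀ hS₀.1)
  have hmax' : ∀ S' : Finset {v : V // v ≠ p q ∧ ¬ G.Adj (p q) v},
      IsIndepSet' (G.comap Subtype.val) S' →
      wt (fun v : {v : V // v ≠ p q ∧ ¬ G.Adj (p q) v} => Δ v.1) S'
        ≤ wt Δ S₀ - Δ (p q) := by
    intro S' h
    have h2 := hS₀.2 _ (extIndep S' h)
    rw [extWt] at h2
    linarith
  have hMWISwt : ∀ S' : Finset {v : V // v ≠ p q ∧ ¬ G.Adj (p q) v},
      IsMWIS (G.comap Subtype.val) (fun v => Δ v.1) S' →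
      wt (fun v : {v : V // v ≠ p q ∧ ¬ G.Adj (p q) v} => Δ v.1) S'
        = wt Δ S₀ - Δ (p q) := by
    intro S' hS'
    refine le_antisymm (hmax' _ hS'.1) ?_
    have h1 := hS'.2 _ (truncIndep S₀ hS₀.1)
    rw [truncWt S₀ hS₀.1 hpq₀] at h1
    exact h1
  have extMWIS : ∀ S' : Finset {v : V // v ≠ p q ∧ ¬ G.Adj (p q) v},
      IsMWIS (G.comap Subtype.val) (fun v => Δ v.1) S' →
      IsMWIS G Δ (insert (p q) (S'.image Subtype.val)) := by
    intro S' hS'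
    refine ⟨extIndep S' hS'.1, fun T hT => ?_⟩
    rw [extWt, hMWISwt S' hS']
    have := hS₀.2 T hT
    linarith
  have truncMWIS : ∀ S : Finset V, IsMWIS G Δ S → p q ∈ S →
      IsMWIS (G.comap Subtype.val) (fun v => Δ v.1)
        (S.subtype (fun v => v ≠ p q ∧ ¬ G.Adj (p q) v)) := by
    intro S hS hmem
    refine ⟨truncIndep S hS.1, fun T' hT' => ?_⟩
    rw [truncWt S hS.1 hmem, hW S hS]
    exact hmax' T' hT'
  -- membership lemmas
  have memExt : ∀ (S' : Finset {v : V // v ≠ p q ∧ ¬ G.Adj (p q) v})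
      (i : {i : ι // i ≠ q}),
      (p i.1 ∈ insert (p q) (S'.image Subtype.val)) ↔
      ((⟨p i.1, fun h => i.2 (hp h), hnadj q i.1 (fun e => i.2 e.symm)⟩ :
        {v : V // v ≠ p q ∧ ¬ G.Adj (p q) v}) ∈ S') := by
    intro S' i
    simp only [Finset.mem_insert, Finset.mem_image]
    constructor
    · rintro (h | ⟨a, ha, h⟩)
      · exact absurd (hp h) i.2
      · have : (⟨p i.1, fun h => i.2 (hp h), hnadj q i.1 (fun e => i.2 e.symm)⟩ :
          {v : V // v ≠ p q ∧ ¬ G.Adj (p q) v}) = a := Subtype.ext h.symm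
        rw [this]; exact ha
    · intro h
      exact Or.inr ⟨_, h, rfl⟩
  constructor
  · refine ⟨?_, ?_, ?_⟩
    · -- forward: MWIS of subcomplex maps into L'
      intro S' hS'
      have hext := extMWIS S' hS'
      refine ⟨portInd p (insert (p q) (S'.image Subtype.val)), hreal.1 _ hext, ?_, ?_⟩
      · simp [portInd]
      · intro i
        simp only [portInd]
        exact iteEq _ _ _ _ (memExt S' i).symm
    · -- surjectivity
      rintro y ⟨x, hxL, hxq, hyx⟩
      obtain ⟨S, hS, hSx⟩ := hreal.2.1 x hxL
      have hpqS : p q ∈ S := by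
        by_cases h : p q ∈ S
        · exact h
        · have : portInd p S q = x q := by rw [hSx]
          rw [hxq] at this
          simp [portInd, h] at this
      refine ⟨S.subtype (fun v => v ≠ p q ∧ ¬ G.Adj (p q) v), truncMWIS S hS hpqS, ?_⟩
      funext i
      have : (⟨p i.1, fun h => i.2 (hp h), hnadj q i.1 (fun e => i.2 e.symm)⟩ :
          {v : V // v ≠ p q ∧ ¬ G.Adj (p q) v}) ∈
          S.subtype (fun v => v ≠ p q ∧ ¬ G.Adj (p q) v) ↔ p i.1 ∈ S :=
        Finset.mem_subtype
      rw [hyx i, ← hSx]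
      simp only [portInd]
      exact iteEq _ _ _ _ this
    · -- injectivity
      intro S' T' hS' hT' hport
      have hS := extMWIS S' hS'
      have hT := extMWIS T' hT'
      have hPI : portInd p (insert (p q) (S'.image Subtype.val))
          = portInd p (insert (p q) (T'.image Subtype.val)) := by
        funext i
        by_cases hi : i = q
        · subst hi; simp [portInd]
        · have h1 := congrFun hport (⟨i, hi⟩ : {i : ι // i ≠ q})
          simp only [portInd] at h1 ⊢
          exact (iteEq _ _ _ _ (memExt S' ⟨i, hi⟩)).trans
            (h1.trans (iteEq _ _ _ _ (memExt T' ⟨i, hi⟩)).symm)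
      have heq := hreal.2.2 _ _ hS hT hPI
      -- conclude S' = T'
      have himg : S'.image Subtype.val = T'.image Subtype.val := by
        ext v
        constructor
        · intro hv
          have hv2 : v ∈ insert (p q) (T'.image Subtype.val) := by
            rw [← heq]; exact Finset.mem_insert_of_mem hv
          rcases Finset.mem_insert.1 hv2 with rfl | h
          · exfalso
            obtain ⟨a, -, ha⟩ := Finset.mem_image.1 hv
            exact a.2.1 ha
          · exact h
        · intro hv
          have hv2 : v ∈ insert (p q) (S'.image Subtype.val) := by
            rw [heq]; exact Finset.mem_insert_of_mem hv
          rcases Finset.mem_insert.1 hv2 with rfl | h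
          · exfalso
            obtain ⟨a, -, ha⟩ := Finset.mem_image.1 hv
            exact a.2.1 ha
          · exact h
      ext a
      constructor
      · intro ha
        have : a.1 ∈ T'.image Subtype.val := by
          rw [← himg]; exact Finset.mem_image_of_mem _ ha
        obtain ⟨b, hb, hba⟩ := Finset.mem_image.1 this
        rwa [← Subtype.ext hba]
      · intro ha
        have : a.1 ∈ S'.image Subtype.val := by
          rw [himg]; exact Finset.mem_image_of_mem _ ha
        obtain ⟨b, hb, hba⟩ := Finset.mem_image.1 this
        rwa [← Subtype.ext hba]
  · intro S S' hS hS'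
    rw [hMWISwt S' hS', hW S hS]
end

section
/- Let C₁ and C₂ be vertex-weighted graphs realizing languages L₁, L₂ via maximum-weight independent sets on their ports, and let γ be a partial bijection between port positions of L₁ and L₂ such that the γ-intersection L₁ ∩_γ L₂ (concatenations of words agreeing on γ-paired positions, with one copy of paired letters deleted) is nonempty. Then the amalgamated graph, obtained by identifying each γ-paired port pair into a single vertex with summed weight and adding no edges between the remaining vertices of C₁ and C₂, realizes the language L₁ ∩_γ L₂ on the union of the (remaining) ports. -/
open Finset
open scoped Classical

section Amalgamation

variable {V₁ V₂ : Type} {n₁ n₂ : ℕ}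

/-- Vertex set of the amalgamation: all vertices of `C₁` together with the
vertices of `C₂` that are not identified with a port of `C₁` via `γ`
(each identified pair is represented by its `C₁` copy). -/
def AmalV (p₂ : Fin n₂ → V₂) (γ : Finset (Fin n₁ × Fin n₂)) : Type :=
  V₁ ⊕ {w : V₂ // ∀ q ∈ γ, w ≠ p₂ q.2}

/-- The amalgamated graph: each identified vertex inherits all edges from both
graphs, and no further edges are added between the two parts. -/
def amalGraph (G₁ : SimpleGraph V₁) (G₂ : SimpleGraph V₂)
    (p₁ : Fin n₁ → V₁) (p₂ : Fin n₂ → V₂) (γ : Finset (Fin n₁ × Fin n₂)) :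
    SimpleGraph (AmalV (V₁ := V₁) p₂ γ) :=
  SimpleGraph.fromRel (fun a b =>
    match a, b with
    | Sum.inl u, Sum.inl w =>
        G₁.Adj u w ∨ ∃ q ∈ γ, ∃ q' ∈ γ, u = p₁ q.1 ∧ w = p₁ q'.1 ∧
          G₂.Adj (p₂ q.2) (p₂ q'.2)
    | Sum.inr u, Sum.inr w => G₂.Adj u.1 w.1
    | Sum.inl u, Sum.inr w => ∃ q ∈ γ, u = p₁ q.1 ∧ G₂.Adj (p₂ q.2) w.1
    | Sum.inr _, Sum.inl _ => False)

/-- Weights of the amalgamation: identified port pairs get summed weights. -/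
noncomputable def amalWt (p₁ : Fin n₁ → V₁) (p₂ : Fin n₂ → V₂)
    (γ : Finset (Fin n₁ × Fin n₂)) (Δ₁ : V₁ → ℝ) (Δ₂ : V₂ → ℝ) :
    AmalV (V₁ := V₁) p₂ γ → ℝ :=
  fun a =>
    match a with
    | Sum.inl u => Δ₁ u + ∑ q ∈ γ, (if u = p₁ q.1 then Δ₂ (p₂ q.2) else 0)
    | Sum.inr w => Δ₂ w.1

/-- The `γ`-intersection language `L₁ ∩_γ L₂`: concatenations of words of `L₁`
and `L₂` agreeing on `γ`-paired positions, with the second copy of each paired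
letter deleted. -/
def gammaLang (L₁ : Set (Fin n₁ → Bool)) (L₂ : Set (Fin n₂ → Bool))
    (γ : Finset (Fin n₁ × Fin n₂)) :
    Set ((Fin n₁ ⊕ {j : Fin n₂ // ∀ q ∈ γ, j ≠ q.2}) → Bool) :=
  {z | ∃ x ∈ L₁, ∃ y ∈ L₂, (∀ q ∈ γ, x q.1 = y q.2) ∧
    (∀ i, z (Sum.inl i) = x i) ∧ (∀ j, z (Sum.inr j) = y j.1)}

namespace AmalAux



noncomputable instance amalVFintype (p₂ : Fin n₂ → V₂) (γ : Finset (Fin n₁ × Fin n₂))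
    [Fintype V₁] [Fintype V₂] : Fintype (AmalV (V₁ := V₁) p₂ γ) := by
  unfold AmalV; infer_instance

/-- Left part of a subset of the amalgamation. -/
noncomputable def leftSet (p₂ : Fin n₂ → V₂) (γ : Finset (Fin n₁ × Fin n₂))
    (S : Finset (AmalV (V₁ := V₁) p₂ γ)) : Finset V₁ :=
  Finset.toLeft S

/-- Right (`V₂`) part of a subset of the amalgamation, including identified ports. -/
noncomputable def rightSet (p₁ : Fin n₁ → V₁) (p₂ : Fin n₂ → V₂)
    (γ : Finset (Fin n₁ × Fin n₂)) (S : Finset (AmalV (V₁ := V₁) p₂ γ)) : Finset V₂ :=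
  (Finset.toRight S).image Subtype.val ∪
    (γ.filter fun q => Sum.inl (p₁ q.1) ∈ S).image fun q => p₂ q.2

lemma mem_leftSet {p₂ : Fin n₂ → V₂} {γ : Finset (Fin n₁ × Fin n₂)}
    {S : Finset (AmalV (V₁ := V₁) p₂ γ)} {u : V₁} :
    u ∈ leftSet p₂ γ S ↔ Sum.inl u ∈ S := Finset.mem_toLeft

lemma mem_rightSet_val {p₁ : Fin n₁ → V₁} {p₂ : Fin n₂ → V₂} {γ : Finset (Fin n₁ × Fin n₂)}
    {S : Finset (AmalV (V₁ := V₁) p₂ γ)} {w : {w : V₂ // ∀ q ∈ γ, w ≠ p₂ q.2}} :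
    w.1 ∈ rightSet p₁ p₂ γ S ↔ Sum.inr w ∈ S := by
  unfold rightSet
  simp only [Finset.mem_union, Finset.mem_image, Finset.mem_toRight, Finset.mem_filter]
  constructor
  · rintro (⟨a, ha, hav⟩ | ⟨q, ⟨hq, _⟩, hqv⟩)
    · rw [Subtype.ext hav] at ha; exact Finset.mem_toRight.mp ha
    · exact absurd hqv.symm (w.2 q hq)
  · intro h; exact Or.inl ⟨w, Finset.mem_toRight.mpr h, rfl⟩

lemma mem_rightSet_port {p₁ : Fin n₁ → V₁} {p₂ : Fin n₂ → V₂} {γ : Finset (Fin n₁ × Fin n₂)}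
    (hp₂ : Function.Injective p₂)
    (hγ : ∀ a ∈ γ, ∀ b ∈ γ, (a.1 = b.1 ∨ a.2 = b.2) → a = b)
    {S : Finset (AmalV (V₁ := V₁) p₂ γ)} {q : Fin n₁ × Fin n₂} (hq : q ∈ γ) :
    p₂ q.2 ∈ rightSet p₁ p₂ γ S ↔ Sum.inl (p₁ q.1) ∈ S := by
  unfold rightSet
  simp only [Finset.mem_union, Finset.mem_image, Finset.mem_toRight, Finset.mem_filter]
  constructor
  · rintro (⟨a, _, hav⟩ | ⟨q', ⟨hq', hm⟩, hqv⟩)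
    · exact absurd hav (a.2 q hq)
    · have : q' = q := hγ q' hq' q hq (Or.inr (hp₂ hqv))
      rwa [this] at hm
  · intro h; exact Or.inr ⟨q, ⟨hq, h⟩, rfl⟩


lemma wt_decomp {p₁ : Fin n₁ → V₁} {p₂ : Fin n₂ → V₂} {γ : Finset (Fin n₁ × Fin n₂)}
    (hp₂ : Function.Injective p₂)
    (hγ : ∀ a ∈ γ, ∀ b ∈ γ, (a.1 = b.1 ∨ a.2 = b.2) → a = b)
    (Δ₁ : V₁ → ℝ) (Δ₂ : V₂ → ℝ)
    (S : Finset (AmalV (V₁ := V₁) p₂ γ)) :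
    wt (amalWt p₁ p₂ γ Δ₁ Δ₂) S = wt Δ₁ (leftSet p₂ γ S) + wt Δ₂ (rightSet p₁ p₂ γ S) := by
  classical
  have hdisj : Disjoint ((Finset.toRight S).image Subtype.val)
      ((γ.filter fun q => Sum.inl (p₁ q.1) ∈ S).image fun q => p₂ q.2) := by
    rw [Finset.disjoint_left]
    rintro a ha hb
    simp only [Finset.mem_image, Finset.mem_filter] at ha hb
    obtain ⟨w, _, rfl⟩ := ha
    obtain ⟨q, ⟨hq, _⟩, hqv⟩ := hb
    exact w.2 q hq hqv.symm
  have hinj : Set.InjOn (fun q : Fin n₁ × Fin n₂ => p₂ q.2)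
      ↑(γ.filter fun q => Sum.inl (p₁ q.1) ∈ S) := by
    intro a ha b hb hab
    simp only [Finset.coe_filter, Set.mem_setOf_eq] at ha hb
    exact hγ a ha.1 b hb.1 (Or.inr (hp₂ hab))
  unfold wt rightSet
  rw [Finset.sum_union hdisj, Finset.sum_image hinj,
    Finset.sum_image (fun a _ b _ h => Subtype.ext h)]
  have hsplit : ∑ v ∈ S, amalWt p₁ p₂ γ Δ₁ Δ₂ v
      = ∑ x ∈ S.toLeft, amalWt p₁ p₂ γ Δ₁ Δ₂ (Sum.inl x)
        + ∑ x ∈ S.toRight, amalWt p₁ p₂ γ Δ₁ Δ₂ (Sum.inr x) := by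
    conv_lhs => rw [← Finset.toLeft_disjSum_toRight (u := S)]
    exact Finset.sum_disjSum _ _ _
  rw [hsplit]
  have hL : ∑ x ∈ S.toLeft, amalWt p₁ p₂ γ Δ₁ Δ₂ (Sum.inl x)
      = ∑ x ∈ S.toLeft, (Δ₁ x + ∑ q ∈ γ, (if x = p₁ q.1 then Δ₂ (p₂ q.2) else 0)) := rfl
  have hR : ∑ x ∈ S.toRight, amalWt p₁ p₂ γ Δ₁ Δ₂ (Sum.inr x)
      = ∑ x ∈ S.toRight, Δ₂ x.1 := rfl
  rw [hL, hR, Finset.sum_add_distrib, Finset.sum_comm, Finset.sum_filter]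
  have : ∀ q ∈ γ, (∑ x ∈ S.toLeft, if x = p₁ q.1 then Δ₂ (p₂ q.2) else 0)
      = (if Sum.inl (p₁ q.1) ∈ S then Δ₂ (p₂ q.2) else 0) := by
    intro q _
    rw [Finset.sum_ite_eq' S.toLeft (p₁ q.1) (fun _ => Δ₂ (p₂ q.2))]
    exact if_congr Finset.mem_toLeft rfl rfl
  rw [Finset.sum_congr rfl this]
  show  _ = _
  unfold leftSet
  ring_nf

lemma indep_decomp {G₁ : SimpleGraph V₁} {G₂ : SimpleGraph V₂}
    {p₁ : Fin n₁ → V₁} {p₂ : Fin n₂ → V₂} {γ : Finset (Fin n₁ × Fin n₂)}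
    (hp₁ : Function.Injective p₁) (hp₂ : Function.Injective p₂)
    (hγ : ∀ a ∈ γ, ∀ b ∈ γ, (a.1 = b.1 ∨ a.2 = b.2) → a = b)
    (S : Finset (AmalV (V₁ := V₁) p₂ γ)) :
    IsIndepSet' (amalGraph G₁ G₂ p₁ p₂ γ) S ↔
      IsIndepSet' G₁ (leftSet p₂ γ S) ∧ IsIndepSet' G₂ (rightSet p₁ p₂ γ S) := by
  constructor
  · intro h
    constructor
    · intro u hu w hw hadj
      refine h _ (mem_leftSet.mp hu) _ (mem_leftSet.mp hw) ?_
      refine (SimpleGraph.fromRel_adj _ _ _).mpr ?_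
      exact ⟨fun hc => hadj.ne (Sum.inl_injective hc), Or.inl (Or.inl hadj)⟩
    · intro a ha b hb hadj
      -- classify a and b
      unfold rightSet at ha hb
      simp only [Finset.mem_union, Finset.mem_image, Finset.mem_toRight,
        Finset.mem_filter] at ha hb
      rcases ha with ⟨wa, hwa, rfl⟩ | ⟨qa, ⟨hqa, hma⟩, rfl⟩ <;>
        rcases hb with ⟨wb, hwb, rfl⟩ | ⟨qb, ⟨hqb, hmb⟩, rfl⟩
      · refine h _ (Finset.mem_toRight.mp hwa) _ (Finset.mem_toRight.mp hwb) ?_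
        refine (SimpleGraph.fromRel_adj _ _ _).mpr ?_
        refine ⟨?_, Or.inl hadj⟩
        intro hc
        exact hadj.ne (congrArg Subtype.val (Sum.inr_injective hc))
      · refine h _ (Finset.mem_toRight.mp hwa) _ hmb ?_
        refine (SimpleGraph.fromRel_adj _ _ _).mpr ?_
        exact ⟨Sum.inr_ne_inl, Or.inr ⟨qb, hqb, rfl, hadj.symm⟩⟩
      · refine h _ hma _ (Finset.mem_toRight.mp hwb) ?_
        refine (SimpleGraph.fromRel_adj _ _ _).mpr ?_
        exact ⟨Sum.inl_ne_inr, Or.inl ⟨qa, hqa, rfl, hadj⟩⟩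
      · refine h _ hma _ hmb ?_
        refine (SimpleGraph.fromRel_adj _ _ _).mpr ?_
        refine ⟨?_, Or.inl (Or.inr ⟨qa, hqa, qb, hqb, rfl, rfl, hadj⟩)⟩
        intro hc
        have h1 : p₁ qa.1 = p₁ qb.1 := Sum.inl_injective hc
        have : qa = qb := hγ qa hqa qb hqb (Or.inl (hp₁ h1))
        exact hadj.ne (by rw [this])
  · rintro ⟨h₁, h₂⟩ i hi j hj hadj
    rw [amalGraph, SimpleGraph.fromRel_adj] at hadj
    obtain ⟨hne, hrel⟩ := hadj
    -- reduce to a statement symmetric in i,j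
    have key : ∀ (i j : AmalV (V₁ := V₁) p₂ γ), i ∈ S → j ∈ S →
        (match i, j with
          | Sum.inl u, Sum.inl w =>
              G₁.Adj u w ∨ ∃ q ∈ γ, ∃ q' ∈ γ, u = p₁ q.1 ∧ w = p₁ q'.1 ∧
                G₂.Adj (p₂ q.2) (p₂ q'.2)
          | Sum.inr u, Sum.inr w => G₂.Adj u.1 w.1
          | Sum.inl u, Sum.inr w => ∃ q ∈ γ, u = p₁ q.1 ∧ G₂.Adj (p₂ q.2) w.1
          | Sum.inr _, Sum.inl _ => False) → False := by
      rintro (u | u) (w | w) hu hw hrel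
      · rcases hrel with hadj' | ⟨q, hq, q', hq', rfl, rfl, hadj'⟩
        · exact h₁ _ (mem_leftSet.mpr hu) _ (mem_leftSet.mpr hw) hadj'
        · exact h₂ _ ((mem_rightSet_port hp₂ hγ hq).mpr hu) _
            ((mem_rightSet_port hp₂ hγ hq').mpr hw) hadj'
      · obtain ⟨q, hq, rfl, hadj'⟩ := hrel
        exact h₂ _ ((mem_rightSet_port hp₂ hγ hq).mpr hu) _
          (mem_rightSet_val.mpr hw) hadj'
      · exact hrel
      · exact h₂ _ (mem_rightSet_val.mpr hu) _ (mem_rightSet_val.mpr hw) hrel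
    rcases hrel with hrel | hrel
    · exact key i j hi hj hrel
    · exact key j i hj hi hrel


/-- Glue two subsets into a subset of the amalgamation. -/
noncomputable def glue (p₂ : Fin n₂ → V₂) (γ : Finset (Fin n₁ × Fin n₂))
    [Fintype V₁] [Fintype V₂] (S₁ : Finset V₁) (S₂ : Finset V₂) :
    Finset (AmalV (V₁ := V₁) p₂ γ) :=
  Finset.univ.filter (fun a =>
    match a with
    | Sum.inl u => u ∈ S₁
    | Sum.inr w => w.1 ∈ S₂)

lemma mem_glue_inl {p₂ : Fin n₂ → V₂} {γ : Finset (Fin n₁ × Fin n₂)}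
    [Fintype V₁] [Fintype V₂] {S₁ : Finset V₁} {S₂ : Finset V₂} {u : V₁} :
    (Sum.inl u : AmalV (V₁ := V₁) p₂ γ) ∈ glue p₂ γ S₁ S₂ ↔ u ∈ S₁ := by
  exact Finset.mem_filter.trans (and_iff_right (Finset.mem_univ _))

lemma mem_glue_inr {p₂ : Fin n₂ → V₂} {γ : Finset (Fin n₁ × Fin n₂)}
    [Fintype V₁] [Fintype V₂] {S₁ : Finset V₁} {S₂ : Finset V₂}
    {w : {w : V₂ // ∀ q ∈ γ, w ≠ p₂ q.2}} :
    (Sum.inr w : AmalV (V₁ := V₁) p₂ γ) ∈ glue p₂ γ S₁ S₂ ↔ w.1 ∈ S₂ := by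
  exact Finset.mem_filter.trans (and_iff_right (Finset.mem_univ _))

lemma leftSet_glue {p₂ : Fin n₂ → V₂} {γ : Finset (Fin n₁ × Fin n₂)}
    [Fintype V₁] [Fintype V₂] {S₁ : Finset V₁} {S₂ : Finset V₂} :
    leftSet p₂ γ (glue p₂ γ S₁ S₂) = S₁ := by
  ext u; rw [mem_leftSet, mem_glue_inl]

lemma rightSet_glue {p₁ : Fin n₁ → V₁} {p₂ : Fin n₂ → V₂} {γ : Finset (Fin n₁ × Fin n₂)}
    (hp₂ : Function.Injective p₂)
    (hγ : ∀ a ∈ γ, ∀ b ∈ γ, (a.1 = b.1 ∨ a.2 = b.2) → a = b)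
    [Fintype V₁] [Fintype V₂] {S₁ : Finset V₁} {S₂ : Finset V₂}
    (hagree : ∀ q ∈ γ, (p₁ q.1 ∈ S₁ ↔ p₂ q.2 ∈ S₂)) :
    rightSet p₁ p₂ γ (glue p₂ γ S₁ S₂) = S₂ := by
  ext w
  by_cases hw : ∀ q ∈ γ, w ≠ p₂ q.2
  · rw [show w = (⟨w, hw⟩ : {w : V₂ // ∀ q ∈ γ, w ≠ p₂ q.2}).1 from rfl,
      mem_rightSet_val, mem_glue_inr]
  · push_neg at hw
    obtain ⟨q, hq, rfl⟩ := hw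
    rw [mem_rightSet_port hp₂ hγ hq, mem_glue_inl, hagree q hq]

lemma eq_of_parts {p₁ : Fin n₁ → V₁} {p₂ : Fin n₂ → V₂} {γ : Finset (Fin n₁ × Fin n₂)}
    {S T : Finset (AmalV (V₁ := V₁) p₂ γ)}
    (hl : leftSet p₂ γ S = leftSet p₂ γ T)
    (hr : rightSet p₁ p₂ γ S = rightSet p₁ p₂ γ T) : S = T := by
  ext a
  rcases a with u | w
  · exact mem_leftSet.symm.trans ((congrArg (u ∈ ·) hl).to_iff.trans mem_leftSet)
  · exact mem_rightSet_val.symm.trans ((congrArg (w.1 ∈ ·) hr).to_iff.trans mem_rightSet_val)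

lemma portInd_eq_true {V ι : Type*} {f : ι → V} {S : Finset V} {i : ι} :
    portInd f S i = true ↔ f i ∈ S := by
  by_cases h : f i ∈ S <;> simp [portInd, h]

end AmalAux


/-- Amalgamation theorem. If `C₁`, `C₂` realize `L₁`, `L₂` on their
ports and `γ` is a partial bijection of port positions with nonempty
`γ`-intersection language, then the amalgamated graph (identified ports get
summed weights, no new edges otherwise) realizes `L₁ ∩_γ L₂` on the union of the
remaining ports. -/
theorem amalgamation_realizes [Fintype V₁] [Fintype V₂]
    (G₁ : SimpleGraph V₁) (G₂ : SimpleGraph V₂)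
    (Δ₁ : V₁ → ℝ) (Δ₂ : V₂ → ℝ) (hΔ₁ : ∀ v, 0 < Δ₁ v) (hΔ₂ : ∀ v, 0 < Δ₂ v)
    (p₁ : Fin n₁ → V₁) (p₂ : Fin n₂ → V₂)
    (hp₁ : Function.Injective p₁) (hp₂ : Function.Injective p₂)
    (L₁ : Set (Fin n₁ → Bool)) (L₂ : Set (Fin n₂ → Bool))
    (hr₁ : Realizes G₁ Δ₁ p₁ L₁) (hr₂ : Realizes G₂ Δ₂ p₂ L₂)
    (γ : Finset (Fin n₁ × Fin n₂))
    (hγ : ∀ a ∈ γ, ∀ b ∈ γ, (a.1 = b.1 ∨ a.2 = b.2) → a = b)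
    (hne : (gammaLang L₁ L₂ γ).Nonempty) :
    Realizes (amalGraph G₁ G₂ p₁ p₂ γ) (amalWt p₁ p₂ γ Δ₁ Δ₂)
      (Sum.elim (fun i => (Sum.inl (p₁ i) : AmalV (V₁ := V₁) p₂ γ))
        (fun j : {j : Fin n₂ // ∀ q ∈ γ, j ≠ q.2} =>
          (Sum.inr ⟨p₂ j.1, fun q hq h => j.2 q hq (hp₂ h)⟩ :
            AmalV (V₁ := V₁) p₂ γ)))
      (gammaLang L₁ L₂ γ) := by
  classical
  set G := amalGraph G₁ G₂ p₁ p₂ γ with hG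
  set Δ := amalWt p₁ p₂ γ Δ₁ Δ₂ with hΔ
  set P := (Sum.elim (fun i => (Sum.inl (p₁ i) : AmalV (V₁ := V₁) p₂ γ))
      (fun j : {j : Fin n₂ // ∀ q ∈ γ, j ≠ q.2} =>
        (Sum.inr ⟨p₂ j.1, fun q hq h => j.2 q hq (hp₂ h)⟩ :
          AmalV (V₁ := V₁) p₂ γ))) with hP
  -- portInd computations
  have hpl : ∀ (S : Finset (AmalV (V₁ := V₁) p₂ γ)) (i : Fin n₁),
      portInd P S (Sum.inl i) = portInd p₁ (AmalAux.leftSet p₂ γ S) i := by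
    intro S i
    by_cases h : (Sum.inl (p₁ i) : AmalV (V₁ := V₁) p₂ γ) ∈ S <;>
      simp [portInd, hP, h, AmalAux.mem_leftSet] <;> exact h
  have hpr : ∀ (S : Finset (AmalV (V₁ := V₁) p₂ γ))
      (j : {j : Fin n₂ // ∀ q ∈ γ, j ≠ q.2}),
      portInd P S (Sum.inr j) = portInd p₂ (AmalAux.rightSet p₁ p₂ γ S) j.1 := by
    intro S j
    have hmem := AmalAux.mem_rightSet_val (p₁ := p₁)
      (S := S) (w := ⟨p₂ j.1, fun q hq h => j.2 q hq (hp₂ h)⟩)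
    by_cases h : (Sum.inr ⟨p₂ j.1, fun q hq h => j.2 q hq (hp₂ h)⟩ :
        AmalV (V₁ := V₁) p₂ γ) ∈ S <;>
      simp [portInd, hP, h, hmem] <;> exact h
  have hkey : ∀ (S : Finset (AmalV (V₁ := V₁) p₂ γ)) (q : Fin n₁ × Fin n₂), q ∈ γ →
      portInd p₂ (AmalAux.rightSet p₁ p₂ γ S) q.2
        = portInd p₁ (AmalAux.leftSet p₂ γ S) q.1 := by
    intro S q hq
    by_cases h : (Sum.inl (p₁ q.1) : AmalV (V₁ := V₁) p₂ γ) ∈ S <;>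
      simp [portInd, h, AmalAux.mem_leftSet, AmalAux.mem_rightSet_port hp₂ hγ hq]
  -- base ground-state pair from nonemptiness
  obtain ⟨z₀, x₀, hx₀, y₀, hy₀, hag₀, -, -⟩ := hne
  obtain ⟨S₀, hS₀, hpS₀⟩ := hr₁.2.1 x₀ hx₀
  obtain ⟨T₀, hT₀, hpT₀⟩ := hr₂.2.1 y₀ hy₀
  have hagm₀ : ∀ q ∈ γ, (p₁ q.1 ∈ S₀ ↔ p₂ q.2 ∈ T₀) := by
    intro q hq
    have h1 : portInd p₁ S₀ q.1 = portInd p₂ T₀ q.2 := by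
      rw [hpS₀, hpT₀]; exact hag₀ q hq
    constructor <;> intro h
    · exact AmalAux.portInd_eq_true.mp
        (by rw [← h1]; exact AmalAux.portInd_eq_true.mpr h)
    · exact AmalAux.portInd_eq_true.mp
        (by rw [h1]; exact AmalAux.portInd_eq_true.mpr h)
  have hU₀l := AmalAux.leftSet_glue (p₂ := p₂) (γ := γ) (S₁ := S₀) (S₂ := T₀)
  have hU₀r := AmalAux.rightSet_glue (p₁ := p₁) hp₂ hγ (S₁ := S₀) (S₂ := T₀) hagm₀
  have hU₀ind : IsIndepSet' G (AmalAux.glue p₂ γ S₀ T₀) := by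
    rw [hG, AmalAux.indep_decomp hp₁ hp₂ hγ, hU₀l, hU₀r]
    exact ⟨hS₀.1, hT₀.1⟩
  have hU₀wt : wt Δ (AmalAux.glue p₂ γ S₀ T₀) = wt Δ₁ S₀ + wt Δ₂ T₀ := by
    rw [hΔ, AmalAux.wt_decomp hp₂ hγ, hU₀l, hU₀r]
  -- characterization of MWIS of the amalgamation
  have hMW : ∀ S, IsMWIS G Δ S ↔
      (IsMWIS G₁ Δ₁ (AmalAux.leftSet p₂ γ S) ∧
        IsMWIS G₂ Δ₂ (AmalAux.rightSet p₁ p₂ γ S)) := by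
    intro S
    constructor
    · rintro ⟨hind, hmax⟩
      obtain ⟨h1, h2⟩ := (AmalAux.indep_decomp hp₁ hp₂ hγ S).mp hind
      have hle1 : wt Δ₁ (AmalAux.leftSet p₂ γ S) ≤ wt Δ₁ S₀ := hS₀.2 _ h1
      have hle2 : wt Δ₂ (AmalAux.rightSet p₁ p₂ γ S) ≤ wt Δ₂ T₀ := hT₀.2 _ h2
      have hge : wt Δ₁ S₀ + wt Δ₂ T₀ ≤ wt Δ S := by
        rw [← hU₀wt]; exact hmax _ hU₀ind
      rw [hΔ, AmalAux.wt_decomp hp₂ hγ] at hge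
      have e1 : wt Δ₁ (AmalAux.leftSet p₂ γ S) = wt Δ₁ S₀ := by linarith
      have e2 : wt Δ₂ (AmalAux.rightSet p₁ p₂ γ S) = wt Δ₂ T₀ := by linarith
      exact ⟨⟨h1, fun T hT => (hS₀.2 T hT).trans e1.ge⟩,
        ⟨h2, fun T hT => (hT₀.2 T hT).trans e2.ge⟩⟩
    · rintro ⟨⟨h1, hm1⟩, ⟨h2, hm2⟩⟩
      refine ⟨(AmalAux.indep_decomp hp₁ hp₂ hγ S).mpr ⟨h1, h2⟩, fun T hT => ?_⟩
      obtain ⟨g1, g2⟩ := (AmalAux.indep_decomp hp₁ hp₂ hγ T).mp hT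
      rw [hΔ, AmalAux.wt_decomp hp₂ hγ, AmalAux.wt_decomp hp₂ hγ]
      exact add_le_add (hm1 _ g1) (hm2 _ g2)
  refine ⟨?_, ?_, ?_⟩
  · -- MWIS ↦ language
    intro S hS
    obtain ⟨hM1, hM2⟩ := (hMW S).mp hS
    exact ⟨portInd p₁ (AmalAux.leftSet p₂ γ S), hr₁.1 _ hM1,
      portInd p₂ (AmalAux.rightSet p₁ p₂ γ S), hr₂.1 _ hM2,
      fun q hq => (hkey S q hq).symm, fun i => hpl S i, fun j => hpr S j⟩
  · -- language ↦ MWIS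
    rintro z ⟨x, hx, y, hy, hagr, hzl, hzr⟩
    obtain ⟨S, hS, hpS⟩ := hr₁.2.1 x hx
    obtain ⟨T, hT, hpT⟩ := hr₂.2.1 y hy
    have hagm : ∀ q ∈ γ, (p₁ q.1 ∈ S ↔ p₂ q.2 ∈ T) := by
      intro q hq
      have h1 : portInd p₁ S q.1 = portInd p₂ T q.2 := by
        rw [hpS, hpT]; exact hagr q hq
      constructor <;> intro h
      · exact AmalAux.portInd_eq_true.mp
          (by rw [← h1]; exact AmalAux.portInd_eq_true.mpr h)
      · exact AmalAux.portInd_eq_true.mp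
          (by rw [h1]; exact AmalAux.portInd_eq_true.mpr h)
    have hl := AmalAux.leftSet_glue (p₂ := p₂) (γ := γ) (S₁ := S) (S₂ := T)
    have hr := AmalAux.rightSet_glue (p₁ := p₁) hp₂ hγ (S₁ := S) (S₂ := T) hagm
    refine ⟨AmalAux.glue p₂ γ S T, (hMW _).mpr ⟨by rw [hl]; exact hS,
      by rw [hr]; exact hT⟩, ?_⟩
    funext a
    rcases a with i | j
    · exact (hpl _ i).trans (by rw [hl, hpS, hzl i])
    · exact (hpr _ j).trans (by rw [hr, hpT, hzr j])
  · -- uniqueness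
    intro S T hS hT hpe
    obtain ⟨hMS1, hMS2⟩ := (hMW S).mp hS
    obtain ⟨hMT1, hMT2⟩ := (hMW T).mp hT
    have hl : AmalAux.leftSet p₂ γ S = AmalAux.leftSet p₂ γ T := by
      refine hr₁.2.2 _ _ hMS1 hMT1 (funext fun i => ?_)
      rw [← hpl, ← hpl, show portInd P S = portInd P T from hpe]
    have hr : AmalAux.rightSet p₁ p₂ γ S = AmalAux.rightSet p₁ p₂ γ T := by
      refine hr₂.2.2 _ _ hMS2 hMT2 (funext fun j => ?_)
      by_cases hj : ∀ q ∈ γ, j ≠ q.2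
      · have e1 := hpr S ⟨j, hj⟩
        have e2 := hpr T ⟨j, hj⟩
        rw [← e1, ← e2, show portInd P S = portInd P T from hpe]
      · push_neg at hj
        obtain ⟨q, hq, rfl⟩ := hj
        rw [hkey S q hq, hkey T q hq, hl]
    exact AmalAux.eq_of_parts hl hr


end Amalgamation
end
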